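/- arXiv:2203.11929 — 5 statements merged into one kernel-verified Lean document; each statement's English description precedes it below -/
import Mathlib

section
/- Let (F,Ω,⋆) be a stratified fusion system on a group S, let Γ be an F-closed set of subgroups of S such that F is Γ-inductive, and let X ≤ S be a subgroup with X⋆ ∈ Γ. Assume that X⋆ is fully normalized in (F,Ω,⋆), that X is fully normalized in N_F(X⋆), and that the fusion system N_F(X⋆) is inductive. Then X is fully normalized in (F,Ω,⋆) and X is normalizer-inductive in F. -/
/-- `F f X Y` asserts that the function `f : S → S` (through its restriction to `X`)
is an `F`-homomorphism from the subgroup `X` to the subgroup `Y`. -/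
abbrev HomPred (S : Type*) [Group S] := (S → S) → Subgroup S → Subgroup S → Prop

/-- A fusion system, with hom-sets given by `F · X Y`, on the subgroup `T`
of the ambient group `S`.  Morphisms are represented by functions `S → S`,
two functions agreeing on `X` representing the same morphism `X → Y`. -/
structure IsFusionSystem {S : Type*} [Group S] (T : Subgroup S) (F : HomPred S) : Prop where
  le_base : ∀ f X Y, F f X Y → X ≤ T ∧ Y ≤ T
  mapsTo : ∀ f X Y, F f X Y → Set.MapsTo f (X : Set S) (Y : Set S)
  injOn : ∀ f X Y, F f X Y → Set.InjOn f (X : Set S)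
  map_mul' : ∀ f X Y, F f X Y → ∀ x ∈ X, ∀ y ∈ X, f (x * y) = f x * f y
  of_eqOn : ∀ f g X Y, F f X Y → Set.EqOn g f (X : Set S) → F g X Y
  conj_mem : ∀ g ∈ T, ∀ X Y : Subgroup S, X ≤ T → Y ≤ T →
    (∀ x ∈ X, g⁻¹ * x * g ∈ Y) → F (fun x => g⁻¹ * x * g) X Y
  comp_mem : ∀ f g X Y Z, F f X Y → F g Y Z → F (g ∘ f) X Z
  restrict_mem : ∀ f X Y X₀ Y₀, F f X Y → X₀ ≤ X → Y₀ ≤ Y →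
    Set.MapsTo f (X₀ : Set S) (Y₀ : Set S) → F f X₀ Y₀
  corestrict_mem : ∀ f X Y, F f X Y → F f X (Subgroup.closure (f '' (X : Set S)))
  inv_mem : ∀ f X Y, F f X Y →
    ∃ g, F g (Subgroup.closure (f '' (X : Set S))) X ∧ ∀ x ∈ X, g (f x) = x

variable {S : Type*} [Group S]

/-- `f` is an `F`-isomorphism from `X` onto `Y`. -/
def IsFIso (F : HomPred S) (f : S → S) (X Y : Subgroup S) : Prop :=
  F f X Y ∧ f '' (X : Set S) = (Y : Set S)

/-- `X^F`, the set of `F`-conjugates of `X`. -/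
def FConj (F : HomPred S) (X : Subgroup S) : Set (Subgroup S) :=
  {Y | ∃ f, IsFIso F f X Y}

/-- `N` is normal in the fusion system `F` on the base subgroup `T`:
`N` is normal in `T` and every `F`-isomorphism `X → Y` extends to an
`F`-isomorphism `XN → YN` mapping `N` onto `N`. -/
def NormalInF (T : Subgroup S) (F : HomPred S) (N : Subgroup S) : Prop :=
  N ≤ T ∧ (∀ g ∈ T, ∀ n ∈ N, g⁻¹ * n * g ∈ N) ∧
    ∀ f X Y, IsFIso F f X Y →
      ∃ g, IsFIso F g (X ⊔ N) (Y ⊔ N) ∧ Set.EqOn g f (X : Set S) ∧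
        g '' (N : Set S) = (N : Set S)

/-- The supremum of the lengths of strictly increasing chains in `Ω`
terminating in `A`. -/
noncomputable def dimEnd (Ω : Set (Subgroup S)) (A : Subgroup S) : ℕ :=
  sSup {n | ∃ c : Fin (n + 1) → Subgroup S,
    StrictMono c ∧ (∀ i, c i ∈ Ω) ∧ c (Fin.last n) = A}

/-- The supremum of the lengths of strictly increasing chains in `Ω`. -/
noncomputable def dimOmega (Ω : Set (Subgroup S)) : ℕ :=
  sSup {n | ∃ c : Fin (n + 1) → Subgroup S, StrictMono c ∧ ∀ i, c i ∈ Ω}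

/-- `(Ω, star)` is a stratification on the fusion system `F` on base `T`. -/
structure IsStratification (T : Subgroup S) (F : HomPred S)
    (Ω : Set (Subgroup S)) (star : Subgroup S → Subgroup S) : Prop where
  omega_le : ∀ A ∈ Ω, A ≤ T
  star_mem : ∀ X : Subgroup S, X ≤ T → star X ∈ Ω
  star_fix : ∀ A ∈ Ω, star A = A
  star_mono : ∀ X Y : Subgroup S, X ≤ T → Y ≤ T → X ≤ Y → star X ≤ star Y
  finDim : ∃ N : ℕ, ∀ n : ℕ,
    (∃ c : Fin (n + 1) → Subgroup S, StrictMono c ∧ ∀ i, c i ∈ Ω) → n ≤ N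
  conj_invariant : ∀ A ∈ Ω, ∀ f Y, IsFIso F f A Y → Y ∈ Ω
  le_star : ∀ X : Subgroup S, X ≤ T → X ≤ star X
  extend_star : ∀ f X Y, IsFIso F f X Y →
    ∃ g, IsFIso F g (star X) (star Y) ∧ Set.EqOn g f (X : Set S)

/-- `dim_Ω(X)`, the supremum of the lengths of strictly increasing chains
in `Ω` terminating in `X⋆`. -/
noncomputable def dimStar (Ω : Set (Subgroup S)) (star : Subgroup S → Subgroup S)
    (X : Subgroup S) : ℕ :=
  dimEnd Ω (star X)

/-- `V` is fully normalized in the stratified fusion system `(F, Ω, star)` on base `T`. -/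
def FullyNormalizedIn (T : Subgroup S) (F : HomPred S) (Ω : Set (Subgroup S))
    (star : Subgroup S → Subgroup S) (V : Subgroup S) : Prop :=
  ∀ U ∈ FConj F V, dimStar Ω star (Subgroup.normalizer (U : Set S) ⊓ T) ≤ dimStar Ω star (Subgroup.normalizer (V : Set S) ⊓ T)

/-- `V` is fully centralized in the stratified fusion system `(F, Ω, star)` on base `T`. -/
def FullyCentralizedIn (T : Subgroup S) (F : HomPred S) (Ω : Set (Subgroup S))
    (star : Subgroup S → Subgroup S) (V : Subgroup S) : Prop :=
  ∀ U ∈ FConj F V,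
    dimStar Ω star ((Subgroup.centralizer (U : Set S) ⊓ T) ⊔ U) ≤
      dimStar Ω star ((Subgroup.centralizer (V : Set S) ⊓ T) ⊔ V)

/-- `Γ` is an `F`-closed set of subgroups. -/
def FClosed (F : HomPred S) (Γ : Set (Subgroup S)) : Prop :=
  Γ.Nonempty ∧ (∀ X ∈ Γ, ∀ Y ∈ FConj F X, Y ∈ Γ) ∧
    ∀ X ∈ Γ, ∀ Y : Subgroup S, X ≤ Y → Y ∈ Γ

/-- `Y` is normalizer-inductive in the fusion system `F` on base `T`. -/
def NormalizerInductive (T : Subgroup S) (F : HomPred S) (Y : Subgroup S) : Prop :=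
  ∀ X ∈ FConj F Y, ∃ φ, F φ (Subgroup.normalizer (X : Set S) ⊓ T) (Subgroup.normalizer (Y : Set S) ⊓ T) ∧
    φ '' (X : Set S) = (Y : Set S)

/-- `Y` is centralizer-inductive in the fusion system `F` on base `T`. -/
def CentralizerInductive (T : Subgroup S) (F : HomPred S) (Y : Subgroup S) : Prop :=
  ∀ X ∈ FConj F Y, ∃ ψ,
    F ψ ((Subgroup.centralizer (X : Set S) ⊓ T) ⊔ X)
        ((Subgroup.centralizer (Y : Set S) ⊓ T) ⊔ Y) ∧
    ψ '' (X : Set S) = (Y : Set S)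

/-- `F` is `Γ`-inductive. -/
def GammaInductive (T : Subgroup S) (F : HomPred S) (Γ : Set (Subgroup S)) : Prop :=
  ∀ X ∈ Γ, ∃ Y ∈ FConj F X, NormalizerInductive T F Y

/-- `F` is inductive (i.e. `Sub(T)`-inductive). -/
def InductiveFS (T : Subgroup S) (F : HomPred S) : Prop :=
  ∀ X : Subgroup S, X ≤ T → ∃ Y ∈ FConj F X, NormalizerInductive T F Y

/-- `⟨Φ⟩_T`: the smallest fusion system on `T` all of whose homomorphisms are
`Famb`-homomorphisms and whose hom-sets contain `Φ`. -/
def GenFS (T : Subgroup S) (Famb : HomPred S) (Φ : HomPred S) : HomPred S :=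
  fun f X Y => ∀ E : HomPred S, IsFusionSystem T E →
    (∀ g A B, E g A B → Famb g A B) → (∀ g A B, Φ g A B → E g A B) → E f X Y

/-- The generating set `Φ` for `N_F(V)`: `F`-isomorphisms between subgroups of
`N_S(V)` extending to `F`-isomorphisms `XV → YV` restricting to an automorphism of `V`. -/
def NPhi (F : HomPred S) (V : Subgroup S) : HomPred S :=
  fun f X Y => X ≤ Subgroup.normalizer (V : Set S) ∧ Y ≤ Subgroup.normalizer (V : Set S) ∧ IsFIso F f X Y ∧
    ∃ g, IsFIso F g (X ⊔ V) (Y ⊔ V) ∧ Set.EqOn g f (X : Set S) ∧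
      g '' (V : Set S) = (V : Set S)

/-- The fusion system `N_F(V)` on `N_S(V)`. -/
def NFus (F : HomPred S) (V : Subgroup S) : HomPred S :=
  GenFS (Subgroup.normalizer (V : Set S)) F (NPhi F V)

/-- The generating set `Ψ` for `C_F(V)`: `F`-isomorphisms between subgroups of
`C_S(V)` extending to `F`-isomorphisms `XV → YV` restricting to the identity on `V`. -/
def CPsi (F : HomPred S) (V : Subgroup S) : HomPred S :=
  fun f X Y => X ≤ Subgroup.centralizer (V : Set S) ∧
    Y ≤ Subgroup.centralizer (V : Set S) ∧ IsFIso F f X Y ∧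
    ∃ g, IsFIso F g (X ⊔ V) (Y ⊔ V) ∧ Set.EqOn g f (X : Set S) ∧ ∀ v ∈ V, g v = v

/-- The fusion system `C_F(V)` on `C_S(V)`. -/
def CFus (F : HomPred S) (V : Subgroup S) : HomPred S :=
  GenFS (Subgroup.centralizer (V : Set S)) F (CPsi F V)

/-- `X ↦ X• = (VX)⋆ ⊓ N_S(V)`. -/
def bulletStar (star : Subgroup S → Subgroup S) (V : Subgroup S) :
    Subgroup S → Subgroup S :=
  fun X => star (V ⊔ X) ⊓ Subgroup.normalizer (V : Set S)

/-- `N_Ω(V) = {X• : X ≤ N_S(V)}`. -/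
def bulletOmega (star : Subgroup S → Subgroup S) (V : Subgroup S) : Set (Subgroup S) :=
  {A | ∃ X : Subgroup S, X ≤ Subgroup.normalizer (V : Set S) ∧ A = bulletStar star V X}

/-- `A ↦ A° = (VA)⋆ ⊓ C_S(V)`. -/
def circStar (star : Subgroup S → Subgroup S) (V : Subgroup S) :
    Subgroup S → Subgroup S :=
  fun A => star (V ⊔ A) ⊓ Subgroup.centralizer (V : Set S)

/-- `C_Ω(V) = {A° : A ≤ C_S(V)}`. -/
def circOmega (star : Subgroup S → Subgroup S) (V : Subgroup S) : Set (Subgroup S) :=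
  {A | ∃ X : Subgroup S, X ≤ Subgroup.centralizer (V : Set S) ∧ A = circStar star V X}

/-- `T` is strongly closed in `F`. -/
def StronglyClosedF (F : HomPred S) (T : Subgroup S) : Prop :=
  ∀ X : Subgroup S, X ≤ T → ∀ Y ∈ FConj F X, Y ≤ T

/-!
If `Y` is fully normalized in a stratified fusion system and some `F`-conjugate `W` of `Y` is
normalizer-inductive, then so is `Y`: a map `N(Y) → N(W)` sending `Y` to `W` cannot lose
dimension, so its extension to the strata is an isomorphism `N(Y)⋆ → N(W)⋆`, whose inverse
carries `N(W)` into `N(Y)`. Conversely, normalizer-inductive subgroups are fully normalized,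
since `dim_Ω` is monotone and invariant under `F`-isomorphisms.

Applied in `F`, this makes `X⋆` normalizer-inductive; applied in `N_F(X⋆)` with the
stratification `(N_Ω(X⋆), •)`, it makes `X` normalizer-inductive in `N_F(X⋆)`. For `U ∈ X^F`,
a map `N(U⋆) → N(X⋆)` sends `U` to a subgroup `U' ≤ X⋆` that is `N_F(X⋆)`-conjugate to `X`
through an `F`-automorphism of `X⋆`, and composing with a map `N(U') ∩ N(X⋆) → N(X)` gives
`N(U) → N(X)`.

That `(N_Ω(V), •)` is a stratification of `N_F(V)` rests on every morphism `A → B` of `N_F(V)`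
extending to an `F`-isomorphism `(VA)⋆ → (VB)⋆` that preserves `V`: this property is stable
under all the operations generating `N_F(V)`, the key point being that an `F`-isomorphism
between members of `Ω` commutes with `⋆`.
-/

open Subgroup

def imageSubgroup (f : S → S) (A : Subgroup S) : Subgroup S :=
  closure (f '' (A : Set S))

theorem imageSubgroup_mono {f : S → S} {A B : Subgroup S} (h : A ≤ B) :
    imageSubgroup f A ≤ imageSubgroup f B :=
  closure_mono (Set.image_mono h)

theorem mem_imageSubgroup {f : S → S} {A : Subgroup S} {a : S} (ha : a ∈ A) :
    f a ∈ imageSubgroup f A :=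
  subset_closure ⟨a, ha, rfl⟩

theorem imageSubgroup_le {f : S → S} {A B : Subgroup S}
    (h : f '' (A : Set S) ⊆ (B : Set S)) : imageSubgroup f A ≤ B :=
  (closure_le B).mpr h

theorem imageSubgroup_congr {f g : S → S} {A : Subgroup S} (h : Set.EqOn f g (A : Set S)) :
    imageSubgroup f A = imageSubgroup g A := by
  rw [imageSubgroup, h.image_eq, imageSubgroup]

theorem imageSubgroup_eq {f : S → S} {A B : Subgroup S}
    (h : f '' (A : Set S) = (B : Set S)) : imageSubgroup f A = B := by
  rw [imageSubgroup, h, closure_eq]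

theorem conj_image_eq_iff_mem_normalizer {s : Set S} {g : S} :
    (fun x => g⁻¹ * x * g) '' s = s ↔ g ∈ normalizer s := by
  rw [← inv_mem_iff, mem_normalizer_iff_conj_image_eq]
  show _ ↔ (fun x => MulAut.conj g⁻¹ x) '' s = s
  simp only [MulAut.conj_apply, inv_inv]

namespace IsFusionSystem

variable {T : Subgroup S} {E : HomPred S} {f g : S → S} {A B X Y Z : Subgroup S}

theorem map_one (hE : IsFusionSystem T E) (hf : E f X Y) : f 1 = 1 := by
  have h := hE.map_mul' f X Y hf 1 X.one_mem 1 X.one_mem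
  rwa [one_mul, left_eq_mul] at h

theorem map_inv (hE : IsFusionSystem T E) (hf : E f X Y) {a : S} (ha : a ∈ X) :
    f a⁻¹ = (f a)⁻¹ := by
  have h := hE.map_mul' f X Y hf a ha a⁻¹ (X.inv_mem ha)
  rw [mul_inv_cancel, hE.map_one hf] at h
  exact eq_inv_of_mul_eq_one_right h.symm

theorem coe_imageSubgroup (hE : IsFusionSystem T E) (hf : E f X Y) (hA : A ≤ X) :
    (imageSubgroup f A : Set S) = f '' (A : Set S) := by
  let Z : Subgroup S :=
    { carrier := f '' (A : Set S)
      one_mem' := ⟨1, A.one_mem, hE.map_one hf⟩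
      mul_mem' := by
        rintro _ _ ⟨a, ha, rfl⟩ ⟨b, hb, rfl⟩
        exact ⟨a * b, A.mul_mem ha hb, hE.map_mul' f X Y hf a (hA ha) b (hA hb)⟩
      inv_mem' := by
        rintro _ ⟨a, ha, rfl⟩
        exact ⟨a⁻¹, A.inv_mem ha, hE.map_inv hf (hA ha)⟩ }
  exact congrArg SetLike.coe (imageSubgroup_eq (B := Z) rfl)

theorem imageSubgroup_le_of_hom (hE : IsFusionSystem T E) (hf : E f X Y) :
    imageSubgroup f X ≤ Y :=
  imageSubgroup_le (hE.mapsTo f X Y hf).image_subset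

theorem isFIso_imageSubgroup (hE : IsFusionSystem T E) (hf : E f X Y) (hA : A ≤ X) :
    IsFIso E f A (imageSubgroup f A) := by
  have hfA : E f A Y := hE.restrict_mem f X Y A Y hf hA le_rfl ((hE.mapsTo f X Y hf).mono_left hA)
  exact ⟨hE.corestrict_mem f A Y hfA, (hE.coe_imageSubgroup hf hA).symm⟩

theorem isFIso_of_image_eq (hE : IsFusionSystem T E) (hf : E f X Y) (hA : A ≤ X) (hB : B ≤ Y)
    (hAB : f '' (A : Set S) = (B : Set S)) : IsFIso E f A B :=
  ⟨hE.restrict_mem f X Y A B hf hA hB fun _ ha => hAB ▸ Set.mem_image_of_mem f ha, hAB⟩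

theorem isFIso_comp (hE : IsFusionSystem T E) (hf : IsFIso E f X Y) (hg : IsFIso E g Y Z) :
    IsFIso E (g ∘ f) X Z :=
  ⟨hE.comp_mem f g X Y Z hf.1 hg.1, by rw [Set.image_comp, hf.2, hg.2]⟩

theorem exists_isFIso_inverse (hE : IsFusionSystem T E) (hf : IsFIso E f X Y) :
    ∃ g, IsFIso E g Y X ∧ (∀ x ∈ X, g (f x) = x) ∧ ∀ y ∈ Y, f (g y) = y := by
  obtain ⟨g, hg, hgf⟩ := hE.inv_mem f X Y hf.1
  have hY : closure (f '' (X : Set S)) = Y := by rw [hf.2, closure_eq]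
  rw [hY] at hg
  refine ⟨g, ⟨hg, hf.2 ▸ Set.LeftInvOn.image_image hgf⟩, hgf, ?_⟩
  intro y hy
  rw [← SetLike.mem_coe, ← hf.2] at hy
  obtain ⟨x, hx, rfl⟩ := hy
  rw [hgf x hx]

theorem fConj_symm (hE : IsFusionSystem T E) (h : Y ∈ FConj E X) : X ∈ FConj E Y := by
  obtain ⟨f, hf⟩ := h
  obtain ⟨g, hg, -⟩ := hE.exists_isFIso_inverse hf
  exact ⟨g, hg⟩

theorem fConj_trans (hE : IsFusionSystem T E) (hY : Y ∈ FConj E X) (hZ : Z ∈ FConj E Y) :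
    Z ∈ FConj E X := by
  obtain ⟨f, hf⟩ := hY
  obtain ⟨g, hg⟩ := hZ
  exact ⟨g ∘ f, hE.isFIso_comp hf hg⟩

theorem hom_mono_right (hE : IsFusionSystem T E) (hf : E f X Y) (hYZ : Y ≤ Z) (hZ : Z ≤ T) :
    E f X Z := by
  have hincl : E (fun x => (1 : S)⁻¹ * x * 1) Y Z :=
    hE.conj_mem 1 T.one_mem Y Z ((hE.le_base f X Y hf).2) hZ (fun y hy => by simpa using hYZ hy)
  exact hE.of_eqOn _ f X Z (hE.comp_mem f _ X Y Z hf hincl) (fun x _ => by simp)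

theorem map_mem_normalizer (hE : IsFusionSystem T E) (hf : E f X Y) (hA : A ≤ X)
    (hAB : f '' (A : Set S) = (B : Set S)) {u : S} (huX : u ∈ X)
    (hu : u ∈ normalizer (A : Set S)) : f u ∈ normalizer (B : Set S) := by
  have hconj : ∀ a ∈ A, f (u * a * u⁻¹) = f u * f a * (f u)⁻¹ := fun a ha => by
    rw [← hE.map_inv hf huX, ← hE.map_mul' f X Y hf u huX a (hA ha),
      ← hE.map_mul' f X Y hf _ (X.mul_mem huX (hA ha)) u⁻¹ (X.inv_mem huX)]
  rw [mem_normalizer_iff] at hu ⊢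
  intro b
  constructor
  · intro hb
    rw [← SetLike.mem_coe, ← hAB] at hb
    obtain ⟨a, ha, rfl⟩ := hb
    rw [← hconj a ha, ← SetLike.mem_coe, ← hAB]
    exact Set.mem_image_of_mem f ((hu a).mp ha)
  · intro hb
    rw [← SetLike.mem_coe, ← hAB] at hb
    obtain ⟨a, ha, hab⟩ := hb
    have ha' : u⁻¹ * a * u ∈ A := (hu _).mpr (by simpa [mul_assoc] using ha)
    have hb' : b = f (u⁻¹ * a * u) := by
      rw [hE.map_mul' f X Y hf _ (X.mul_mem (X.inv_mem huX) (hA ha)) u huX,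
        hE.map_mul' f X Y hf u⁻¹ (X.inv_mem huX) a (hA ha), hE.map_inv hf huX, hab]
      group
    rw [hb', ← SetLike.mem_coe, ← hAB]
    exact Set.mem_image_of_mem f ha'

theorem imageSubgroup_sup (hE : IsFusionSystem T E) (hf : E f X Y) (hA : A ≤ X) (hB : B ≤ X) :
    imageSubgroup f (A ⊔ B) = imageSubgroup f A ⊔ imageSubgroup f B := by
  refine le_antisymm (imageSubgroup_le ?_)
    (sup_le (imageSubgroup_mono le_sup_left) (imageSubgroup_mono le_sup_right))
  rintro _ ⟨x, hx, rfl⟩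
  rw [sup_eq_closure] at hx
  have key : x ∈ X ∧ f x ∈ imageSubgroup f A ⊔ imageSubgroup f B := by
    induction hx using closure_induction with
    | mem z hz =>
      rcases hz with hz | hz
      · exact ⟨hA hz, mem_sup_left (mem_imageSubgroup hz)⟩
      · exact ⟨hB hz, mem_sup_right (mem_imageSubgroup hz)⟩
    | one => exact ⟨X.one_mem, by rw [hE.map_one hf]; exact Subgroup.one_mem _⟩
    | mul a b _ _ iha ihb =>
      refine ⟨X.mul_mem iha.1 ihb.1, ?_⟩
      rw [hE.map_mul' f X Y hf a iha.1 b ihb.1]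
      exact Subgroup.mul_mem _ iha.2 ihb.2
    | inv a _ iha =>
      refine ⟨X.inv_mem iha.1, ?_⟩
      rw [hE.map_inv hf iha.1]
      exact Subgroup.inv_mem _ iha.2
  exact key.2

end IsFusionSystem

section Dimension

variable {Ω : Set (Subgroup S)} {T : Subgroup S} {E : HomPred S} {g : S → S} {A B : Subgroup S}

def ChainBounded (Ω : Set (Subgroup S)) : Prop :=
  ∃ N : ℕ, ∀ n : ℕ,
    (∃ c : Fin (n + 1) → Subgroup S, StrictMono c ∧ ∀ i, c i ∈ Ω) → n ≤ N

def chainLengthsTo (Ω : Set (Subgroup S)) (A : Subgroup S) : Set ℕ :=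
  {n | ∃ c : Fin (n + 1) → Subgroup S,
    StrictMono c ∧ (∀ i, c i ∈ Ω) ∧ c (Fin.last n) = A}

theorem dimEnd_eq_sSup : dimEnd Ω A = sSup (chainLengthsTo Ω A) := rfl

theorem ChainBounded.bddAbove (hΩ : ChainBounded Ω) (A : Subgroup S) :
    BddAbove (chainLengthsTo Ω A) := by
  obtain ⟨N, hN⟩ := hΩ
  exact ⟨N, fun n ⟨c, hc, hcΩ, _⟩ => hN n ⟨c, hc, hcΩ⟩⟩

theorem zero_mem_chainLengthsTo (hA : A ∈ Ω) : 0 ∈ chainLengthsTo Ω A :=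
  ⟨fun _ => A, Fin.strictMono_iff_lt_succ.mpr fun i => i.elim0, fun _ => hA, rfl⟩

theorem dimEnd_mem_chainLengthsTo (hΩ : ChainBounded Ω) (hA : A ∈ Ω) :
    dimEnd Ω A ∈ chainLengthsTo Ω A :=
  Nat.sSup_mem ⟨0, zero_mem_chainLengthsTo hA⟩ (hΩ.bddAbove A)

theorem succ_dimEnd_mem_chainLengthsTo (hΩ : ChainBounded Ω) (hA : A ∈ Ω) (hB : B ∈ Ω)
    (hAB : A < B) : dimEnd Ω A + 1 ∈ chainLengthsTo Ω B := by
  obtain ⟨c, hc, hcΩ, hcA⟩ := dimEnd_mem_chainLengthsTo hΩ hA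
  refine ⟨Fin.snoc c B, fun i j hij => ?_,
    Fin.lastCases (by simpa using hB) (by simpa using hcΩ), by simp⟩
  obtain ⟨i, rfl⟩ := Fin.exists_castSucc_eq.mpr (ne_of_lt (lt_of_lt_of_le hij (Fin.le_last j)))
  induction j using Fin.lastCases with
  | last => simpa using ((hc.monotone (Fin.le_last i)).trans_eq hcA).trans_lt hAB
  | cast j => simpa using hc (Fin.castSucc_lt_castSucc_iff.mp hij)

theorem dimEnd_lt_dimEnd (hΩ : ChainBounded Ω) (hA : A ∈ Ω) (hB : B ∈ Ω) (hAB : A < B) :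
    dimEnd Ω A < dimEnd Ω B :=
  le_csSup (hΩ.bddAbove B) (succ_dimEnd_mem_chainLengthsTo hΩ hA hB hAB)

theorem dimEnd_le_dimEnd (hΩ : ChainBounded Ω) (hA : A ∈ Ω) (hB : B ∈ Ω) (hAB : A ≤ B) :
    dimEnd Ω A ≤ dimEnd Ω B := by
  rcases hAB.eq_or_lt with rfl | hlt
  · exact le_rfl
  · exact (dimEnd_lt_dimEnd hΩ hA hB hlt).le

theorem eq_of_le_of_dimEnd_le (hΩ : ChainBounded Ω) (hA : A ∈ Ω) (hB : B ∈ Ω)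
    (hAB : A ≤ B) (hdim : dimEnd Ω B ≤ dimEnd Ω A) : A = B :=
  hAB.eq_of_not_lt fun hlt => (dimEnd_lt_dimEnd hΩ hA hB hlt).not_ge hdim

theorem chainLengthsTo_subset_of_isFIso (hE : IsFusionSystem T E)
    (hconj : ∀ A ∈ Ω, ∀ f B, IsFIso E f A B → B ∈ Ω) (hg : IsFIso E g A B) :
    chainLengthsTo Ω A ⊆ chainLengthsTo Ω B := by
  rintro n ⟨c, hc, hcΩ, hcA⟩
  have hcle : ∀ i, c i ≤ A := fun i => hcA ▸ hc.monotone (Fin.le_last i)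
  have hcoe : ∀ i, (imageSubgroup g (c i) : Set S) = g '' (c i : Set S) :=
    fun i => hE.coe_imageSubgroup hg.1 (hcle i)
  refine ⟨fun i => imageSubgroup g (c i), fun i j hij => ?_,
    fun i => hconj _ (hcΩ i) g _ (hE.isFIso_imageSubgroup hg.1 (hcle i)),
    by simpa [hcA] using imageSubgroup_eq hg.2⟩
  have hinj : Set.InjOn g (A : Set S) := hE.injOn g A B hg.1
  refine lt_of_le_of_ne (imageSubgroup_mono (hc hij).le) fun heq => (hc hij).ne ?_
  rw [← SetLike.coe_set_eq, ← hinj.image_eq_image_iff (SetLike.coe_subset_coe.mpr (hcle i))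
    (SetLike.coe_subset_coe.mpr (hcle j)), ← hcoe, ← hcoe]
  exact congrArg SetLike.coe heq

theorem dimEnd_eq_of_isFIso (hE : IsFusionSystem T E)
    (hconj : ∀ A ∈ Ω, ∀ f B, IsFIso E f A B → B ∈ Ω) (hg : IsFIso E g A B) :
    dimEnd Ω A = dimEnd Ω B := by
  obtain ⟨g', hg', -⟩ := hE.exists_isFIso_inverse hg
  rw [dimEnd_eq_sSup, dimEnd_eq_sSup, (chainLengthsTo_subset_of_isFIso hE hconj hg).antisymm
    (chainLengthsTo_subset_of_isFIso hE hconj hg')]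

end Dimension

namespace IsStratification

variable {T : Subgroup S} {E : HomPred S} {Ω : Set (Subgroup S)} {st : Subgroup S → Subgroup S}
  {f : S → S} {A B : Subgroup S}

theorem dimStar_eq_of_isFIso (hE : IsFusionSystem T E) (hΩ : IsStratification T E Ω st)
    (hf : IsFIso E f A B) : dimStar Ω st A = dimStar Ω st B := by
  obtain ⟨g, hg, -⟩ := hΩ.extend_star f A B hf
  exact dimEnd_eq_of_isFIso hE hΩ.conj_invariant hg

theorem dimStar_mono (hΩ : IsStratification T E Ω st) (hB : B ≤ T) (hAB : A ≤ B) :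
    dimStar Ω st A ≤ dimStar Ω st B :=
  dimEnd_le_dimEnd hΩ.finDim (hΩ.star_mem A (hAB.trans hB)) (hΩ.star_mem B hB)
    (hΩ.star_mono A B (hAB.trans hB) hB hAB)

theorem star_eq_of_le_of_dimStar_le (hΩ : IsStratification T E Ω st) (hB : B ≤ T)
    (hAB : A ≤ B) (hdim : dimStar Ω st B ≤ dimStar Ω st A) : st A = st B :=
  eq_of_le_of_dimEnd_le hΩ.finDim (hΩ.star_mem A (hAB.trans hB)) (hΩ.star_mem B hB)
    (hΩ.star_mono A B (hAB.trans hB) hB hAB) hdim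

end IsStratification

section NormalizerInductive

variable {T : Subgroup S} {E : HomPred S} {Ω : Set (Subgroup S)} {st : Subgroup S → Subgroup S}
  {W Y : Subgroup S}

theorem exists_normalizer_hom_of_fullyNormalizedIn (hE : IsFusionSystem T E)
    (hΩ : IsStratification T E Ω st) (hfn : FullyNormalizedIn T E Ω st Y)
    (hW : W ∈ FConj E Y) (hWni : NormalizerInductive T E W) :
    ∃ ρ, E ρ (normalizer (W : Set S) ⊓ T) (normalizer (Y : Set S) ⊓ T) ∧
      ρ '' (W : Set S) = (Y : Set S) := by
  set NY := normalizer (Y : Set S) ⊓ T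
  set NW := normalizer (W : Set S) ⊓ T
  obtain ⟨χ, hχ, hχY⟩ := hWni Y (hE.fConj_symm hW)
  have hχiso := hE.isFIso_imageSubgroup hχ le_rfl
  obtain ⟨g, hg, hgχ⟩ := hΩ.extend_star χ NY _ hχiso
  have hstar : st (imageSubgroup χ NY) = st NW :=
    hΩ.star_eq_of_le_of_dimStar_le inf_le_right (hE.imageSubgroup_le_of_hom hχ)
      ((hfn W hW).trans (hΩ.dimStar_eq_of_isFIso hE hχiso).le)
  rw [hstar] at hg
  obtain ⟨g', hg', hg'g, -⟩ := hE.exists_isFIso_inverse hg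
  obtain ⟨hYT, hWT⟩ := hE.le_base _ _ _ hW.choose_spec.1
  have hNYst : NY ≤ st NY := hΩ.le_star NY inf_le_right
  have hNWst : NW ≤ st NW := hΩ.le_star NW inf_le_right
  have hYNY : Y ≤ NY := le_inf le_normalizer hYT
  have hgY : g '' (Y : Set S) = W := by
    rw [(hgχ.mono (SetLike.coe_subset_coe.mpr hYNY)).image_eq, hχY]
  have hg'W : g' '' (W : Set S) = Y :=
    hgY ▸ Set.LeftInvOn.image_image fun y hy => hg'g y (hNYst (hYNY hy))
  refine ⟨g', hE.restrict_mem g' _ _ NW NY hg'.1 hNWst hNYst fun u hu => ?_, hg'W⟩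
  refine mem_inf.mpr ⟨?_, hΩ.omega_le _ (hΩ.star_mem NY inf_le_right)
    (hE.mapsTo _ _ _ hg'.1 (hNWst hu))⟩
  exact hE.map_mem_normalizer hg'.1 ((le_inf le_normalizer hWT).trans hNWst) hg'W (hNWst hu)
    (mem_inf.mp hu).1

theorem NormalizerInductive.of_fullyNormalizedIn (hE : IsFusionSystem T E)
    (hΩ : IsStratification T E Ω st) (hfn : FullyNormalizedIn T E Ω st Y)
    (hW : W ∈ FConj E Y) (hWni : NormalizerInductive T E W) : NormalizerInductive T E Y := by
  obtain ⟨ρ, hρ, hρW⟩ := exists_normalizer_hom_of_fullyNormalizedIn hE hΩ hfn hW hWni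
  intro U hU
  obtain ⟨χ, hχ, hχU⟩ := hWni U (hE.fConj_trans (hE.fConj_symm hW) hU)
  exact ⟨ρ ∘ χ, hE.comp_mem _ _ _ _ _ hχ hρ, by rw [Set.image_comp, hχU, hρW]⟩

theorem FullyNormalizedIn.of_normalizerInductive (hE : IsFusionSystem T E)
    (hΩ : IsStratification T E Ω st) (hY : NormalizerInductive T E Y) :
    FullyNormalizedIn T E Ω st Y := by
  intro U hU
  obtain ⟨ρ, hρ, -⟩ := hY U hU
  calc dimStar Ω st (normalizer (U : Set S) ⊓ T)
      = dimStar Ω st (imageSubgroup ρ (normalizer (U : Set S) ⊓ T)) :=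
        hΩ.dimStar_eq_of_isFIso hE (hE.isFIso_imageSubgroup hρ le_rfl)
    _ ≤ dimStar Ω st (normalizer (Y : Set S) ⊓ T) :=
        hΩ.dimStar_mono inf_le_right (hE.imageSubgroup_le_of_hom hρ)

end NormalizerInductive

namespace IsStratification

variable {T : Subgroup S} {F : HomPred S} {Ω : Set (Subgroup S)} {star : Subgroup S → Subgroup S}
  {g : S → S} {A D M N : Subgroup S}

theorem star_le_of_le (hΩ : IsStratification T F Ω star) (hA : A ∈ Ω) (hDA : D ≤ A) :
    star D ≤ A := by
  have hAT := hΩ.omega_le A hA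
  simpa only [hΩ.star_fix A hA] using hΩ.star_mono D A (hDA.trans hAT) hAT hDA

theorem imageSubgroup_star (hF : IsFusionSystem ⊤ F) (hΩ : IsStratification ⊤ F Ω star)
    (hg : IsFIso F g M N) (hM : M ∈ Ω) (hD : D ≤ M) :
    imageSubgroup g (star D) = star (imageSubgroup g D) := by
  have hsD : star D ≤ M := hΩ.star_le_of_le hM hD
  obtain ⟨g', hg', hg'g, hgg'⟩ := hF.exists_isFIso_inverse hg
  have hgD : imageSubgroup g D ≤ N := imageSubgroup_eq hg.2 ▸ imageSubgroup_mono hD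
  have hsgD : star (imageSubgroup g D) ≤ N :=
    hΩ.star_le_of_le (hΩ.conj_invariant M hM g N hg) hgD
  apply le_antisymm
  · have hmem : imageSubgroup g' (star (imageSubgroup g D)) ∈ Ω :=
      hΩ.conj_invariant _ (hΩ.star_mem _ le_top) g' _ (hF.isFIso_imageSubgroup hg'.1 hsgD)
    have hD' : D ≤ imageSubgroup g' (star (imageSubgroup g D)) := fun d hd =>
      hg'g d (hD hd) ▸ mem_imageSubgroup (hΩ.le_star _ le_top (mem_imageSubgroup hd))
    refine (imageSubgroup_mono (hΩ.star_le_of_le hmem hD')).trans (imageSubgroup_le ?_)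
    rw [hF.coe_imageSubgroup hg'.1 hsgD]
    rintro _ ⟨_, ⟨b, hb, rfl⟩, rfl⟩
    rwa [hgg' b (hsgD hb)]
  · exact hΩ.star_le_of_le
      (hΩ.conj_invariant _ (hΩ.star_mem D le_top) g _ (hF.isFIso_imageSubgroup hg.1 hsD))
      (imageSubgroup_mono (hΩ.le_star D le_top))

theorem normalizer_le_normalizer_star (hF : IsFusionSystem ⊤ F)
    (hΩ : IsStratification ⊤ F Ω star) (U : Subgroup S) :
    normalizer (U : Set S) ≤ normalizer (star U : Set S) := by
  intro k hk
  have hc : F (fun x => k⁻¹ * x * k) (star U) ⊤ :=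
    hF.conj_mem k (mem_top k) _ _ le_top le_top fun _ _ => mem_top _
  have h := hΩ.imageSubgroup_star hF (hF.isFIso_imageSubgroup hc le_rfl)
    (hΩ.star_mem U le_top) (hΩ.le_star U le_top)
  rw [imageSubgroup_eq (conj_image_eq_iff_mem_normalizer.mpr hk)] at h
  rw [← conj_image_eq_iff_mem_normalizer, ← hF.coe_imageSubgroup hc le_rfl, h]

end IsStratification

namespace GenFS

variable {R : Subgroup S} {F Φ : HomPred S} {f : S → S} {X Y : Subgroup S}

theorem isFusionSystem_restrictBase (hF : IsFusionSystem ⊤ F) (R : Subgroup S) :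
    IsFusionSystem R (fun f X Y => X ≤ R ∧ Y ≤ R ∧ F f X Y) where
  le_base _ _ _ h := ⟨h.1, h.2.1⟩
  mapsTo f X Y h := hF.mapsTo f X Y h.2.2
  injOn f X Y h := hF.injOn f X Y h.2.2
  map_mul' f X Y h := hF.map_mul' f X Y h.2.2
  of_eqOn f g X Y h heq := ⟨h.1, h.2.1, hF.of_eqOn f g X Y h.2.2 heq⟩
  conj_mem g _ X Y hX hY hc := ⟨hX, hY, hF.conj_mem g (mem_top g) X Y le_top le_top hc⟩
  comp_mem f g X Y Z hf hg := ⟨hf.1, hg.2.1, hF.comp_mem f g X Y Z hf.2.2 hg.2.2⟩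
  restrict_mem f X Y X₀ Y₀ h hX hY hm :=
    ⟨hX.trans h.1, hY.trans h.2.1, hF.restrict_mem f X Y X₀ Y₀ h.2.2 hX hY hm⟩
  corestrict_mem f X Y h :=
    ⟨h.1, (hF.imageSubgroup_le_of_hom h.2.2).trans h.2.1, hF.corestrict_mem f X Y h.2.2⟩
  inv_mem f X Y h := by
    obtain ⟨g, hg, hgf⟩ := hF.inv_mem f X Y h.2.2
    exact ⟨g, ⟨(hF.imageSubgroup_le_of_hom h.2.2).trans h.2.1, h.1, hg⟩, hgf⟩

theorem le_restrictBase (hΦ : ∀ f X Y, Φ f X Y → X ≤ R ∧ Y ≤ R ∧ F f X Y)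
    (hF : IsFusionSystem ⊤ F) (h : GenFS R F Φ f X Y) :
    X ≤ R ∧ Y ≤ R ∧ F f X Y :=
  h _ (isFusionSystem_restrictBase hF R) (fun _ _ _ h => h.2.2) hΦ

theorem isFusionSystem (hΦ : ∀ f X Y, Φ f X Y → X ≤ R ∧ Y ≤ R ∧ F f X Y)
    (hF : IsFusionSystem ⊤ F) : IsFusionSystem R (GenFS R F Φ) where
  le_base _ _ _ h := ⟨(le_restrictBase hΦ hF h).1, (le_restrictBase hΦ hF h).2.1⟩
  mapsTo f X Y h := hF.mapsTo f X Y (le_restrictBase hΦ hF h).2.2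
  injOn f X Y h := hF.injOn f X Y (le_restrictBase hΦ hF h).2.2
  map_mul' f X Y h := hF.map_mul' f X Y (le_restrictBase hΦ hF h).2.2
  of_eqOn f g X Y h heq E hE hEF hΦE := hE.of_eqOn f g X Y (h E hE hEF hΦE) heq
  conj_mem g hg X Y hX hY hc E hE _ _ := hE.conj_mem g hg X Y hX hY hc
  comp_mem f g X Y Z hf hg E hE hEF hΦE :=
    hE.comp_mem f g X Y Z (hf E hE hEF hΦE) (hg E hE hEF hΦE)
  restrict_mem f X Y X₀ Y₀ h hX hY hm E hE hEF hΦE :=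
    hE.restrict_mem f X Y X₀ Y₀ (h E hE hEF hΦE) hX hY hm
  corestrict_mem f X Y h E hE hEF hΦE := hE.corestrict_mem f X Y (h E hE hEF hΦE)
  inv_mem f X Y h := by
    obtain ⟨g, -, hgf⟩ := hF.inv_mem f X Y (le_restrictBase hΦ hF h).2.2
    refine ⟨g, fun E hE hEF hΦE => ?_, hgf⟩
    have hfE := h E hE hEF hΦE
    obtain ⟨gE, hgE, hgEf⟩ := hE.inv_mem f X Y hfE
    refine hE.of_eqOn gE g _ X hgE ?_
    change Set.EqOn g gE (imageSubgroup f X : Set S)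
    rw [hE.coe_imageSubgroup hfE le_rfl]
    rintro _ ⟨x, hx, rfl⟩
    rw [hgf x hx, hgEf x hx]

theorem of_mem (h : Φ f X Y) : GenFS R F Φ f X Y :=
  fun _ _ _ hΦE => hΦE f X Y h

end GenFS

section NFus

variable {F : HomPred S} {V A X Y : Subgroup S} {f κ : S → S}

theorem NPhi.le (h : NPhi F V f X Y) :
    X ≤ normalizer (V : Set S) ∧ Y ≤ normalizer (V : Set S) ∧ F f X Y :=
  ⟨h.1, h.2.1, h.2.2.1.1⟩

theorem isFusionSystem_NFus (hF : IsFusionSystem ⊤ F) (V : Subgroup S) :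
    IsFusionSystem (normalizer (V : Set S)) (NFus F V) :=
  GenFS.isFusionSystem (fun _ _ _ => NPhi.le) hF

theorem NFus.le (hF : IsFusionSystem ⊤ F) (h : NFus F V f X Y) : F f X Y :=
  (GenFS.le_restrictBase (fun _ _ _ => NPhi.le) hF h).2.2

theorem isFIso_NFus_of_isFIso_self (hF : IsFusionSystem ⊤ F) (hκ : IsFIso F κ V V)
    (hA : A ≤ V) : IsFIso (NFus F V) κ A (imageSubgroup κ A) := by
  have hiso := hF.isFIso_imageSubgroup hκ.1 hA
  have hκA : imageSubgroup κ A ≤ V := imageSubgroup_eq hκ.2 ▸ imageSubgroup_mono hA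
  refine ⟨GenFS.of_mem ⟨hA.trans le_normalizer, hκA.trans le_normalizer, hiso, κ, ?_,
    fun _ _ => rfl, hκ.2⟩, hiso.2⟩
  rwa [sup_eq_right.mpr hA, sup_eq_right.mpr hκA]

end NFus

def HasStarExtension (F : HomPred S) (star : Subgroup S → Subgroup S) (V : Subgroup S) :
    HomPred S :=
  fun f X _ => ∃ g, IsFIso F g (star (V ⊔ X)) (star (V ⊔ imageSubgroup f X)) ∧
    Set.EqOn g f (X : Set S) ∧ g '' (V : Set S) = (V : Set S)

namespace HasStarExtension

variable {F : HomPred S} {Ω : Set (Subgroup S)} {star : Subgroup S → Subgroup S}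
  {f g h w : S → S} {N V X X₀ Y Y' Z : Subgroup S}

theorem isFIso_star_sup (hF : IsFusionSystem ⊤ F) (hΩ : IsStratification ⊤ F Ω star)
    (hw : IsFIso F w (star (V ⊔ X)) N) (hwV : w '' (V : Set S) = (V : Set S))
    (hX₀ : X₀ ≤ X) :
    IsFIso F w (star (V ⊔ X₀)) (star (V ⊔ imageSubgroup w X₀)) := by
  have hsup : V ⊔ X₀ ≤ star (V ⊔ X) :=
    (sup_le_sup_left hX₀ V).trans (hΩ.le_star _ le_top)
  have h := hΩ.imageSubgroup_star hF hw (hΩ.star_mem _ le_top) hsup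
  rw [hF.imageSubgroup_sup hw.1 (le_sup_left.trans hsup) (le_sup_right.trans hsup),
    imageSubgroup_eq hwV] at h
  exact h ▸ hF.isFIso_imageSubgroup hw.1 (hΩ.star_le_of_le (hΩ.star_mem _ le_top) hsup)

theorem of_eqOn (hf : HasStarExtension F star V f X Y) (heq : Set.EqOn g f (X : Set S)) :
    HasStarExtension F star V g X Y' := by
  obtain ⟨w, hw, hwf, hwV⟩ := hf
  refine ⟨w, ?_, fun x hx => (hwf hx).trans (heq hx).symm, hwV⟩
  rwa [imageSubgroup_congr heq]

theorem conj (hF : IsFusionSystem ⊤ F) (hΩ : IsStratification ⊤ F Ω star) {k : S}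
    (hk : k ∈ normalizer (V : Set S)) :
    HasStarExtension F star V (fun x => k⁻¹ * x * k) X Y := by
  have hc : F (fun x => k⁻¹ * x * k) (star (V ⊔ X)) ⊤ :=
    hF.conj_mem k (mem_top k) _ _ le_top le_top fun _ _ => mem_top _
  have hkV := conj_image_eq_iff_mem_normalizer.mpr hk
  exact ⟨_, isFIso_star_sup hF hΩ (hF.isFIso_imageSubgroup hc le_rfl) hkV le_rfl,
    fun _ _ => rfl, hkV⟩

theorem restrict (hF : IsFusionSystem ⊤ F) (hΩ : IsStratification ⊤ F Ω star)
    (hf : HasStarExtension F star V f X Y) (hX₀ : X₀ ≤ X) :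
    HasStarExtension F star V f X₀ Y' := by
  obtain ⟨w, hw, hwf, hwV⟩ := hf
  have hwf₀ : Set.EqOn w f (X₀ : Set S) := hwf.mono (SetLike.coe_subset_coe.mpr hX₀)
  exact ⟨w, imageSubgroup_congr hwf₀ ▸ isFIso_star_sup hF hΩ hw hwV hX₀, hwf₀, hwV⟩

theorem comp (hF : IsFusionSystem ⊤ F) (hΩ : IsStratification ⊤ F Ω star) (hf : F f X Y)
    (hfe : HasStarExtension F star V f X Y) (hhe : HasStarExtension F star V h Y Z) :
    HasStarExtension F star V (h ∘ f) X Z := by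
  obtain ⟨wf, hwf, hwff, hwfV⟩ := hfe
  obtain ⟨wh, hwh, hwhh, hwhV⟩ := hhe
  have hfX : imageSubgroup f X ≤ Y := hF.imageSubgroup_le_of_hom hf
  have hcomp : imageSubgroup wh (imageSubgroup f X) = imageSubgroup (h ∘ f) X := by
    rw [imageSubgroup_congr (hwhh.mono (SetLike.coe_subset_coe.mpr hfX)), imageSubgroup,
      hF.coe_imageSubgroup hf le_rfl, ← Set.image_comp, imageSubgroup]
  refine ⟨wh ∘ wf, hF.isFIso_comp hwf (hcomp ▸ isFIso_star_sup hF hΩ hwh hwhV hfX),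
    fun x hx => ?_, by rw [Set.image_comp, hwfV, hwhV]⟩
  simp only [Function.comp_apply, hwff hx]
  exact hwhh (hF.mapsTo f X Y hf hx)

theorem inverse (hF : IsFusionSystem ⊤ F) (hΩ : IsStratification ⊤ F Ω star) (hf : F f X Y)
    (hfe : HasStarExtension F star V f X Y) (hgf : ∀ x ∈ X, g (f x) = x) :
    HasStarExtension F star V g (imageSubgroup f X) X := by
  obtain ⟨w, hw, hwf, hwV⟩ := hfe
  obtain ⟨w', hw', hw'w, -⟩ := hF.exists_isFIso_inverse hw
  have hXst : X ≤ star (V ⊔ X) := le_sup_right.trans (hΩ.le_star _ le_top)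
  have hVst : V ≤ star (V ⊔ X) := le_sup_left.trans (hΩ.le_star _ le_top)
  have hw'g : Set.EqOn w' g (imageSubgroup f X : Set S) := by
    rw [hF.coe_imageSubgroup hf le_rfl]
    rintro _ ⟨x, hx, rfl⟩
    rw [hgf x hx, ← hwf hx, hw'w x (hXst hx)]
  have hgX : imageSubgroup g (imageSubgroup f X) = X := imageSubgroup_eq <| by
    rw [hF.coe_imageSubgroup hf le_rfl]
    exact Set.LeftInvOn.image_image hgf
  refine ⟨w', by rwa [hgX], hw'g, ?_⟩
  nth_rewrite 1 [← hwV]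
  exact Set.LeftInvOn.image_image fun v hv => hw'w v (hVst hv)

theorem of_NPhi (hΩ : IsStratification ⊤ F Ω star) (h : NPhi F V f X Y) :
    HasStarExtension F star V f X Y := by
  obtain ⟨-, -, hf, g, hg, hgf, hgV⟩ := h
  obtain ⟨w, hw, hwg⟩ := hΩ.extend_star g (X ⊔ V) (Y ⊔ V) hg
  refine ⟨w, ?_, fun x hx => (hwg (mem_sup_left hx)).trans (hgf hx), ?_⟩
  · rwa [imageSubgroup_eq hf.2, sup_comm V X, sup_comm V Y]
  · rw [(hwg.mono (SetLike.coe_subset_coe.mpr le_sup_right)).image_eq, hgV]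

end HasStarExtension

section NFus

variable {F : HomPred S} {Ω : Set (Subgroup S)} {star : Subgroup S → Subgroup S}
  {f : S → S} {V X Y : Subgroup S}

theorem isFusionSystem_NFus_inf_hasStarExtension (hF : IsFusionSystem ⊤ F)
    (hΩ : IsStratification ⊤ F Ω star) (V : Subgroup S) :
    IsFusionSystem (normalizer (V : Set S))
      (fun f X Y => NFus F V f X Y ∧ HasStarExtension F star V f X Y) := by
  have hN := isFusionSystem_NFus hF V
  exact
  { le_base := fun f X Y h => hN.le_base f X Y h.1
    mapsTo := fun f X Y h => hN.mapsTo f X Y h.1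
    injOn := fun f X Y h => hN.injOn f X Y h.1
    map_mul' := fun f X Y h => hN.map_mul' f X Y h.1
    of_eqOn := fun f g X Y h heq => ⟨hN.of_eqOn f g X Y h.1 heq, h.2.of_eqOn heq⟩
    conj_mem := fun g hg X Y hX hY hc =>
      ⟨hN.conj_mem g hg X Y hX hY hc, HasStarExtension.conj hF hΩ hg⟩
    comp_mem := fun f g X Y Z hf hg =>
      ⟨hN.comp_mem f g X Y Z hf.1 hg.1,
        HasStarExtension.comp hF hΩ (NFus.le hF hf.1) hf.2 hg.2⟩
    restrict_mem := fun f X Y X₀ Y₀ h hX hY hm =>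
      ⟨hN.restrict_mem f X Y X₀ Y₀ h.1 hX hY hm, h.2.restrict hF hΩ hX⟩
    corestrict_mem := fun f X Y h => ⟨hN.corestrict_mem f X Y h.1, h.2⟩
    inv_mem := fun f X Y h => by
      obtain ⟨g, hg, hgf⟩ := hN.inv_mem f X Y h.1
      exact ⟨g, ⟨hg, h.2.inverse hF hΩ (NFus.le hF h.1) hgf⟩, hgf⟩ }

theorem NFus.hasStarExtension (hF : IsFusionSystem ⊤ F) (hΩ : IsStratification ⊤ F Ω star)
    (h : NFus F V f X Y) : HasStarExtension F star V f X Y :=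
  (h _ (isFusionSystem_NFus_inf_hasStarExtension hF hΩ V) (fun _ _ _ h => NFus.le hF h.1)
    fun _ _ _ h => ⟨GenFS.of_mem h, HasStarExtension.of_NPhi hΩ h⟩).2

end NFus

theorem IsFusionSystem.image_inf_normalizer {T : Subgroup S} {E : HomPred S} {g : S → S}
    {M M' V : Subgroup S} (hE : IsFusionSystem T E) (hg : IsFIso E g M M') (hVM : V ≤ M)
    (hgV : g '' (V : Set S) = (V : Set S)) :
    g '' ((M ⊓ normalizer (V : Set S) : Subgroup S) : Set S) =
      ((M' ⊓ normalizer (V : Set S) : Subgroup S) : Set S) := by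
  obtain ⟨g', hg', hg'g, hgg'⟩ := hE.exists_isFIso_inverse hg
  have hVM' : V ≤ M' := by
    rw [← SetLike.coe_subset_coe, ← hg.2, ← hgV]
    exact Set.image_mono hVM
  have hg'V : g' '' (V : Set S) = (V : Set S) := by
    nth_rewrite 1 [← hgV]
    exact Set.LeftInvOn.image_image fun v hv => hg'g v (hVM hv)
  apply Set.Subset.antisymm
  · rintro _ ⟨a, ha, rfl⟩
    obtain ⟨haM, haN⟩ := mem_inf.mp ha
    exact mem_inf.mpr ⟨hE.mapsTo g M M' hg.1 haM, hE.map_mem_normalizer hg.1 hVM hgV haM haN⟩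
  · intro b hb
    obtain ⟨hbM, hbN⟩ := mem_inf.mp hb
    exact ⟨g' b, mem_inf.mpr ⟨hE.mapsTo g' M' M hg'.1 hbM,
      hE.map_mem_normalizer hg'.1 hVM' hg'V hbM hbN⟩, hgg' b hbM⟩

section Bullet

variable {F : HomPred S} {Ω : Set (Subgroup S)} {star : Subgroup S → Subgroup S}
  {f : S → S} {V A B : Subgroup S}

theorem mem_bulletOmega_iff (hΩ : IsStratification ⊤ F Ω star) :
    A ∈ bulletOmega star V ↔
      V ≤ A ∧ A ≤ normalizer (V : Set S) ∧ star A ⊓ normalizer (V : Set S) = A := by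
  constructor
  · rintro ⟨X, hX, rfl⟩
    have hsub : V ⊔ X ≤ bulletStar star V X :=
      le_inf (hΩ.le_star _ le_top) (sup_le le_normalizer hX)
    have hstar : star (bulletStar star V X) = star (V ⊔ X) :=
      le_antisymm (hΩ.star_le_of_le (hΩ.star_mem _ le_top) inf_le_left)
        (hΩ.star_mono _ _ le_top le_top hsub)
    exact ⟨le_sup_left.trans hsub, inf_le_right, by rw [hstar]; rfl⟩
  · rintro ⟨hVA, hAN, hA⟩
    refine ⟨A, hAN, ?_⟩
    change A = star (V ⊔ A) ⊓ normalizer (V : Set S)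
    rw [sup_eq_right.mpr hVA, hA]

theorem mem_bulletOmega_of_isFIso (hF : IsFusionSystem ⊤ F) (hΩ : IsStratification ⊤ F Ω star)
    (hA : A ∈ bulletOmega star V) (hf : IsFIso (NFus F V) f A B) : B ∈ bulletOmega star V := by
  obtain ⟨hVA, -, hA⟩ := (mem_bulletOmega_iff hΩ).mp hA
  obtain ⟨g, hg, hgf, hgV⟩ := NFus.hasStarExtension hF hΩ hf.1
  rw [sup_eq_right.mpr hVA, imageSubgroup_eq hf.2] at hg
  have hgA : g '' (A : Set S) = B := hgf.image_eq.trans hf.2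
  have hVB : V ≤ B := by
    rw [← SetLike.coe_subset_coe, ← hgA, ← hgV]
    exact Set.image_mono hVA
  rw [sup_eq_right.mpr hVB] at hg
  refine (mem_bulletOmega_iff hΩ).mpr
    ⟨hVB, ((isFusionSystem_NFus hF V).le_base f A B hf.1).2, ?_⟩
  have himg := hF.image_inf_normalizer hg (hVA.trans (hΩ.le_star A le_top)) hgV
  rw [hA, hgA] at himg
  exact SetLike.coe_injective himg.symm

theorem exists_bulletStar_extension (hF : IsFusionSystem ⊤ F)
    (hΩ : IsStratification ⊤ F Ω star) (hf : IsFIso (NFus F V) f A B) :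
    ∃ g, IsFIso (NFus F V) g (bulletStar star V A) (bulletStar star V B) ∧
      Set.EqOn g f (A : Set S) := by
  obtain ⟨g, hg, hgf, hgV⟩ := NFus.hasStarExtension hF hΩ hf.1
  rw [imageSubgroup_eq hf.2] at hg
  have hVst : ∀ X, V ≤ star (V ⊔ X) := fun X => le_sup_left.trans (hΩ.le_star _ le_top)
  have himg := hF.image_inf_normalizer hg (hVst A) hgV
  have hiso := hF.isFIso_of_image_eq hg.1 inf_le_left inf_le_left himg
  have hV : ∀ X, V ≤ bulletStar star V X := fun X => le_inf (hVst X) le_normalizer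
  refine ⟨g, ⟨GenFS.of_mem ⟨inf_le_right, inf_le_right, hiso, g, ?_, fun _ _ => rfl, hgV⟩,
    himg⟩, hgf⟩
  rwa [sup_eq_left.mpr (hV A), sup_eq_left.mpr (hV B)]

theorem chainBounded_bulletOmega (hΩ : IsStratification ⊤ F Ω star) :
    ChainBounded (bulletOmega star V) := by
  obtain ⟨N, hN⟩ := hΩ.finDim
  refine ⟨N, fun n ⟨c, hc, hcΩ⟩ =>
    hN n ⟨fun i => star (c i), fun i j hij => ?_, fun i => hΩ.star_mem _ le_top⟩⟩
  refine lt_of_le_of_ne (hΩ.star_mono _ _ le_top le_top (hc hij).le) fun hstar => (hc hij).ne ?_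
  rw [← ((mem_bulletOmega_iff hΩ).mp (hcΩ i)).2.2,
    ← ((mem_bulletOmega_iff hΩ).mp (hcΩ j)).2.2]
  exact congrArg (· ⊓ _) hstar

theorem isStratification_bullet (hF : IsFusionSystem ⊤ F) (hΩ : IsStratification ⊤ F Ω star)
    (V : Subgroup S) :
    IsStratification (normalizer (V : Set S)) (NFus F V) (bulletOmega star V)
      (bulletStar star V) where
  omega_le _ hA := ((mem_bulletOmega_iff hΩ).mp hA).2.1
  star_mem A hA := ⟨A, hA, rfl⟩
  star_fix A hA := by
    obtain ⟨hVA, -, hA⟩ := (mem_bulletOmega_iff hΩ).mp hA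
    change star (V ⊔ A) ⊓ _ = A
    rw [sup_eq_right.mpr hVA, hA]
  star_mono _ _ _ _ hAB :=
    inf_le_inf_right _ (hΩ.star_mono _ _ le_top le_top (sup_le_sup_left hAB V))
  finDim := chainBounded_bulletOmega hΩ
  conj_invariant _ hA _ _ hf := mem_bulletOmega_of_isFIso hF hΩ hA hf
  le_star _ hA := le_inf (le_sup_right.trans (hΩ.le_star _ le_top)) hA
  extend_star _ _ _ hf := exists_bulletStar_extension hF hΩ hf

end Bullet

theorem NormalizerInductive.of_star {F : HomPred S} {Ω : Set (Subgroup S)}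
    {star : Subgroup S → Subgroup S} {X : Subgroup S} (hF : IsFusionSystem ⊤ F)
    (hΩ : IsStratification ⊤ F Ω star) (hstar : NormalizerInductive ⊤ F (star X))
    (hX : NormalizerInductive (normalizer (star X : Set S)) (NFus F (star X)) X) :
    NormalizerInductive ⊤ F X := by
  rintro U ⟨φ, hφ⟩
  obtain ⟨φ', hφ', hφ'φ⟩ := hΩ.extend_star φ X U hφ
  obtain ⟨ψ, hψ, hψU⟩ := hstar (star U) ⟨φ', hφ'⟩
  have hsU : star U ≤ normalizer (star U : Set S) ⊓ ⊤ := le_inf le_normalizer le_top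
  have hUN : normalizer (U : Set S) ≤ normalizer (star U : Set S) ⊓ ⊤ :=
    le_inf (hΩ.normalizer_le_normalizer_star hF U) le_top
  have hU : U ≤ normalizer (star U : Set S) ⊓ ⊤ := (hΩ.le_star U le_top).trans hsU
  have hκ : IsFIso F (ψ ∘ φ') (star X) (star X) :=
    hF.isFIso_comp hφ' (hF.isFIso_of_image_eq hψ hsU (le_inf le_normalizer le_top) hψU)
  have hκX : imageSubgroup (ψ ∘ φ') X = imageSubgroup ψ U := by
    rw [imageSubgroup, Set.image_comp, hφ'φ.image_eq, hφ.2, imageSubgroup]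
  obtain ⟨χ, hχ, hχU'⟩ := hX (imageSubgroup ψ U)
    ⟨ψ ∘ φ', hκX ▸ isFIso_NFus_of_isFIso_self hF hκ (hΩ.le_star X le_top)⟩
  have hψN : F ψ (normalizer (U : Set S) ⊓ ⊤)
      (normalizer (imageSubgroup ψ U : Set S) ⊓ normalizer (star X : Set S)) := by
    refine hF.restrict_mem ψ _ _ _ _ hψ (inf_le_left.trans hUN) (le_inf inf_le_right le_top)
      fun u hu => mem_inf.mpr ⟨?_, (mem_inf.mp (hF.mapsTo _ _ _ hψ (hUN (mem_inf.mp hu).1))).1⟩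
    exact hF.map_mem_normalizer hψ hU (hF.coe_imageSubgroup hψ hU).symm (hUN (mem_inf.mp hu).1)
      (mem_inf.mp hu).1
  refine ⟨χ ∘ ψ, hF.hom_mono_right (hF.comp_mem _ _ _ _ _ hψN (NFus.le hF hχ))
    (inf_le_inf_left _ le_top) le_top, ?_⟩
  rw [Set.image_comp, ← hF.coe_imageSubgroup hψ hU, hχU']

theorem fullyNormalized_and_normalizerInductive_of_inductive_NF_general
    {S : Type*} [Group S] (F : HomPred S)
    (Ω : Set (Subgroup S)) (star : Subgroup S → Subgroup S)
    (hF : IsFusionSystem ⊤ F) (hΩ : IsStratification ⊤ F Ω star)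
    (Γ : Set (Subgroup S)) (hind : GammaInductive ⊤ F Γ)
    (X : Subgroup S) (hXs : star X ∈ Γ)
    (h1 : FullyNormalizedIn ⊤ F Ω star (star X))
    (h2 : FullyNormalizedIn (Subgroup.normalizer (star X : Set S)) (NFus F (star X))
      (bulletOmega star (star X)) (bulletStar star (star X)) X)
    (h3 : InductiveFS (Subgroup.normalizer (star X : Set S)) (NFus F (star X))) :
    FullyNormalizedIn ⊤ F Ω star X ∧ NormalizerInductive ⊤ F X := by
  obtain ⟨W, hW, hWni⟩ := hind (star X) hXs
  have hstar : NormalizerInductive ⊤ F (star X) :=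
    NormalizerInductive.of_fullyNormalizedIn hF hΩ h1 hW hWni
  obtain ⟨W', hW', hW'ni⟩ := h3 X ((hΩ.le_star X le_top).trans le_normalizer)
  have hXN : NormalizerInductive (normalizer (star X : Set S)) (NFus F (star X)) X :=
    NormalizerInductive.of_fullyNormalizedIn (isFusionSystem_NFus hF _)
      (isStratification_bullet hF hΩ _) h2 hW' hW'ni
  have hX : NormalizerInductive ⊤ F X := NormalizerInductive.of_star hF hΩ hstar hXN
  exact ⟨FullyNormalizedIn.of_normalizerInductive hF hΩ hX, hX⟩

/-- Lemma 2.12. Suppose `X⋆ ∈ Γ`, `X⋆` is fully normalized in `F`,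
`X` is fully normalized in `N_F(X⋆)`, and `N_F(X⋆)` is inductive.  Then `X` is fully
normalized in `F` and normalizer-inductive in `F`. -/
theorem fullyNormalized_and_normalizerInductive_of_inductive_NF
    {S : Type*} [Group S] (F : HomPred S)
    (Ω : Set (Subgroup S)) (star : Subgroup S → Subgroup S)
    (hF : IsFusionSystem ⊤ F) (hΩ : IsStratification ⊤ F Ω star)
    (Γ : Set (Subgroup S)) (hΓ : FClosed F Γ) (hind : GammaInductive ⊤ F Γ)
    (X : Subgroup S) (hXs : star X ∈ Γ)
    (h1 : FullyNormalizedIn ⊤ F Ω star (star X))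
    (h2 : FullyNormalizedIn (Subgroup.normalizer (star X : Set S)) (NFus F (star X))
      (bulletOmega star (star X)) (bulletStar star (star X)) X)
    (h3 : InductiveFS (Subgroup.normalizer (star X : Set S)) (NFus F (star X))) :
    FullyNormalizedIn ⊤ F Ω star X ∧ NormalizerInductive ⊤ F X :=
  fullyNormalized_and_normalizerInductive_of_inductive_NF_general F Ω star hF hΩ Γ hind X hXs h1 h2
    h3
end

section
/- Let G be a torsion group, and let A and B be subgroups of G such that the order of every element of A is relatively prime to the order of every element of B. If [A,B] ≤ C_B(A), then [A,B] = 1. -/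
open scoped commutatorElement

section CommutatorElement

variable {G : Type*} [Group G] {a b : G}

/-- Since `a⁻¹ * ⁅a, b⁆ = b * a⁻¹ * b⁻¹` is a conjugate of `a⁻¹` and commutes with `⁅a, b⁆`,
raising it to the power `orderOf a` kills both the conjugate and the factor `a⁻¹`. -/
theorem commutatorElement_pow_orderOf_left (h : Commute a ⁅a, b⁆) : ⁅a, b⁆ ^ orderOf a = 1 :=
  calc ⁅a, b⁆ ^ orderOf a = (a⁻¹ * ⁅a, b⁆) ^ orderOf a := by
        rw [h.inv_left.mul_pow, inv_pow, pow_orderOf_eq_one, inv_one, one_mul]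
    _ = (b * a⁻¹ * b⁻¹) ^ orderOf a := by rw [commutatorElement_def]; group
    _ = 1 := by rw [conj_pow, inv_pow, pow_orderOf_eq_one, inv_one, mul_one, mul_inv_cancel]

theorem orderOf_commutatorElement_dvd_orderOf_left (h : Commute a ⁅a, b⁆) :
    orderOf ⁅a, b⁆ ∣ orderOf a :=
  orderOf_dvd_of_pow_eq_one (commutatorElement_pow_orderOf_left h)

theorem commutatorElement_eq_one_of_coprime (h : Commute a ⁅a, b⁆)
    (hco : Nat.Coprime (orderOf a) (orderOf ⁅a, b⁆)) : ⁅a, b⁆ = 1 :=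
  orderOf_eq_one_iff.mp (hco.symm.eq_one_of_dvd (orderOf_commutatorElement_dvd_orderOf_left h))

end CommutatorElement

theorem commutator_eq_bot_of_coprime_orders_general
    {G : Type*} [Group G]
    (A B : Subgroup G)
    (hco : ∀ a ∈ A, ∀ b ∈ B, Nat.Coprime (orderOf a) (orderOf b))
    (hAB : ⁅A, B⁆ ≤ Subgroup.centralizer (A : Set G) ⊓ B) :
    ⁅A, B⁆ = ⊥ := by
  rw [eq_bot_iff, Subgroup.commutator_le]
  intro a ha b hb
  obtain ⟨hcA, hcB⟩ := hAB (Subgroup.commutator_mem_commutator ha hb)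
  exact commutatorElement_eq_one_of_coprime (hcA a ha) (hco a ha _ hcB)

/-- Lemma 6.3. Let `G` be a torsion group and `A`, `B` subgroups of `G`
such that the order of every element of `A` is relatively prime to the order of every
element of `B`.  If `[A, B] ≤ C_B(A)` then `[A, B] = 1`. -/
theorem commutator_eq_bot_of_coprime_orders
    {G : Type*} [Group G] (htor : ∀ g : G, IsOfFinOrder g)
    (A B : Subgroup G)
    (hco : ∀ a ∈ A, ∀ b ∈ B, Nat.Coprime (orderOf a) (orderOf b))
    (hAB : ⁅A, B⁆ ≤ Subgroup.centralizer (A : Set G) ⊓ B) :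
    ⁅A, B⁆ = ⊥ :=
  commutator_eq_bot_of_coprime_orders_general A B hco hAB
end

section
/- Let p be a prime and let G be a torsion group such that G = AP, where P is a normal p-subgroup of G having the normalizer-increasing property and A is a p′-subgroup of G. Suppose that there exists a subgroup B ≤ C_P(A) such that [C_P(B), A] = 1. Then [A,P] = 1 and A ∩ P = 1, so that G is isomorphic to the direct product A × P via the multiplication map (a,x) ↦ ax. -/
/-- A group `P` has the normalizer-increasing property if for all subgroups `X < Y` of
`P`, `X` is a proper subgroup of `N_Y(X)`. -/
def NormalizerIncreasing (P : Type*) [Group P] : Prop :=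
  ∀ X Y : Subgroup P, X < Y → X < Subgroup.normalizer (X : Set P) ⊓ Y

/-!
Let `D = C_P(A)`. Since `B ≤ D`, we get `C_P(D) ≤ C_P(B) ≤ C(A)`. If `x ∈ P` normalizes `D` and
`a ∈ A`, then `x⁻¹ a x` centralizes `D`, so `c = a⁻¹ x⁻¹ a x` lies in `C_P(D)` and commutes with
`a`; hence `c ^ |a| = (x⁻¹ a x) ^ |a| = 1`, and `c = 1` because `c` is a `p`-element. Thus
`N_P(D) ≤ D`, and the normalizer-increasing property forces `D = P`, i.e. `[A, P] = 1`.
-/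

open Subgroup

section

variable {G : Type*} [Group G]

theorem IsPGroup.eq_one_of_pow_eq_one {p : ℕ} {P : Subgroup G} (hP : IsPGroup p P) {g : G}
    (hg : g ∈ P) {n : ℕ} (hn : n.Coprime p) (h : g ^ n = 1) : g = 1 := by
  have hcop : (orderOf g).Coprime n := by
    simpa using hP.orderOf_coprime hn.symm ⟨g, hg⟩
  exact orderOf_eq_one_iff.mp (hcop.eq_one_of_dvd (orderOf_dvd_of_pow_eq_one h))

theorem NormalizerIncreasing.eq_top_of_normalizer_le {P : Type*} [Group P]
    (hP : NormalizerIncreasing P) {H : Subgroup P} (h : normalizer (H : Set P) ≤ H) : H = ⊤ := by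
  by_contra hne
  have hlt := hP H ⊤ (lt_top_iff_ne_top.mpr hne)
  rw [inf_top_eq] at hlt
  exact lt_irrefl _ (hlt.trans_le h)

theorem NormalizerIncreasing.le_of_normalizer_inf_le {P D : Subgroup G}
    (hP : NormalizerIncreasing P) (hDP : D ≤ P) (h : normalizer (D : Set G) ⊓ P ≤ D) : P ≤ D := by
  rw [← subgroupOf_eq_top]
  refine hP.eq_top_of_normalizer_le ?_
  rw [← subgroupOf_normalizer_eq hDP]
  exact fun x hx => mem_subgroupOf.mpr (h ⟨hx, x.2⟩)

theorem inv_mul_mul_mem_centralizer_of_mem_normalizer {D : Subgroup G} {a x : G}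
    (ha : a ∈ centralizer (D : Set G)) (hx : x ∈ normalizer (D : Set G)) :
    x⁻¹ * a * x ∈ centralizer (D : Set G) := by
  intro d hd
  have hcomm : x * d * x⁻¹ * a = a * (x * d * x⁻¹) := ha _ ((mem_normalizer_iff.mp hx d).mp hd)
  calc d * (x⁻¹ * a * x) = x⁻¹ * (x * d * x⁻¹ * a) * x := by group
    _ = x⁻¹ * (a * (x * d * x⁻¹)) * x := by rw [hcomm]
    _ = x⁻¹ * a * x * d := by group

theorem commute_of_mem_normalizer {p : ℕ} {A P D : Subgroup G} (hPn : P.Normal)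
    (hPp : IsPGroup p P) (hDA : D ≤ centralizer (A : Set G))
    (hCD : P ⊓ centralizer (D : Set G) ≤ centralizer (A : Set G)) {a x : G} (ha : a ∈ A)
    (hap : (orderOf a).Coprime p) (hxP : x ∈ P) (hxD : x ∈ normalizer (D : Set G)) :
    Commute a x := by
  set c := a⁻¹ * (x⁻¹ * a * x) with hc
  have hcP : c ∈ P := by
    have hconj : c = a⁻¹ * x⁻¹ * a⁻¹⁻¹ * x := by rw [hc]; group
    rw [hconj]
    exact mul_mem (hPn.conj_mem _ (inv_mem hxP) _) hxP
  have haD : a ∈ centralizer (D : Set G) := le_centralizer_iff.mp hDA ha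
  have hcD : c ∈ centralizer (D : Set G) :=
    mul_mem (inv_mem haD) (inv_mul_mul_mem_centralizer_of_mem_normalizer haD hxD)
  have hac : Commute a c := hCD ⟨hcP, hcD⟩ a ha
  have hcn : c ^ orderOf a = 1 := by
    have hac_eq : a * c = x⁻¹ * a * x⁻¹⁻¹ := by rw [hc, mul_inv_cancel_left, inv_inv]
    have hpow := hac.mul_pow (orderOf a)
    rw [hac_eq, conj_pow, pow_orderOf_eq_one, one_mul, mul_one, mul_inv_cancel] at hpow
    exact hpow.symm
  have hc1 : c = 1 := hPp.eq_one_of_pow_eq_one hcP hap hcn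
  rw [hc, inv_mul_eq_one, mul_assoc, eq_inv_mul_iff_mul_eq] at hc1
  exact hc1.symm

theorem le_centralizer_of_normalizerIncreasing {p : ℕ} {A P B : Subgroup G} (hPn : P.Normal)
    (hPp : IsPGroup p P) (hPni : NormalizerIncreasing P)
    (hA : ∀ a ∈ A, (orderOf a).Coprime p) (hB : B ≤ P ⊓ centralizer (A : Set G))
    (hCB : P ⊓ centralizer (B : Set G) ≤ centralizer (A : Set G)) :
    P ≤ centralizer (A : Set G) := by
  set D := P ⊓ centralizer (A : Set G)
  have hCD : P ⊓ centralizer (D : Set G) ≤ centralizer (A : Set G) :=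
    (inf_le_inf_left P (centralizer_le hB)).trans hCB
  have hND : normalizer (D : Set G) ⊓ P ≤ D := fun x hx =>
    ⟨hx.2, fun a ha => (commute_of_mem_normalizer hPn hPp inf_le_right hCD ha (hA a ha)
      hx.2 hx.1).eq⟩
  exact (hPni.le_of_normalizer_inf_le inf_le_left hND).trans inf_le_right

theorem inf_eq_bot_of_coprime_orderOf {p : ℕ} {A P : Subgroup G} (hPp : IsPGroup p P)
    (hA : ∀ a ∈ A, (orderOf a).Coprime p) : A ⊓ P = ⊥ :=
  eq_bot_iff.mpr fun g hg =>
    (mem_bot).mpr (hPp.eq_one_of_pow_eq_one hg.2 (hA g hg.1) (pow_orderOf_eq_one g))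

theorem exists_mulEquiv_prod_of_le_centralizer {A P : Subgroup G}
    (hAP : A ≤ centralizer (P : Set G)) (hdisj : A ⊓ P = ⊥)
    (hgen : ∀ g : G, ∃ a ∈ A, ∃ x ∈ P, g = a * x) :
    ∃ e : (A × P) ≃* G, ∀ ax : A × P, e ax = (ax.1 : G) * (ax.2 : G) := by
  let φ := A.subtype.noncommCoprod P.subtype fun a x => (hAP a.2 x x.2).symm
  have hinj : Function.Injective φ := by
    refine (MonoidHom.noncommCoprod_injective _ _ _).mpr
      ⟨A.subtype_injective, P.subtype_injective, ?_⟩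
    rwa [range_subtype, range_subtype, disjoint_iff]
  have hsurj : Function.Surjective φ := fun g => by
    obtain ⟨a, ha, x, hx, rfl⟩ := hgen g
    exact ⟨(⟨a, ha⟩, ⟨x, hx⟩), rfl⟩
  exact ⟨MulEquiv.ofBijective φ ⟨hinj, hsurj⟩, fun _ => rfl⟩

end

theorem thompson_A_times_B_general
    {G : Type*} [Group G] (p : ℕ)
    (A P : Subgroup G) (hPnormal : P.Normal) (hPp : IsPGroup p ↥P)
    (hPni : NormalizerIncreasing ↥P)
    (hA : ∀ a ∈ A, Nat.Coprime (orderOf a) p)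
    (hgen : ∀ g : G, ∃ a ∈ A, ∃ x ∈ P, g = a * x)
    (B : Subgroup G) (hB : B ≤ P ⊓ Subgroup.centralizer (A : Set G))
    (hCB : ⁅P ⊓ Subgroup.centralizer (B : Set G), A⁆ = ⊥) :
    ⁅A, P⁆ = ⊥ ∧ A ⊓ P = ⊥ ∧
      ∃ e : (↥A × ↥P) ≃* G, ∀ ax : ↥A × ↥P, e ax = (ax.1 : G) * (ax.2 : G) := by
  have hPA : P ≤ centralizer (A : Set G) :=
    le_centralizer_of_normalizerIncreasing hPnormal hPp hPni hA hB
      (commutator_eq_bot_iff_le_centralizer.mp hCB)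
  have hAP : A ≤ centralizer (P : Set G) := le_centralizer_iff.mp hPA
  have hdisj : A ⊓ P = ⊥ := inf_eq_bot_of_coprime_orderOf hPp hA
  exact ⟨commutator_eq_bot_iff_le_centralizer.mpr hAP, hdisj,
    exists_mulEquiv_prod_of_le_centralizer hAP hdisj hgen⟩

/-- Thompson's `A × B` Lemma, Lemma 6.4. Let `G` be a torsion group
with `G = AP`, where `P` is a normal `p`-subgroup of `G` with the normalizer-increasing
property and `A` is a `p′`-subgroup of `G`.  If there is `B ≤ C_P(A)` with
`[C_P(B), A] = 1`, then `[A, P] = 1`, `A ∩ P = 1`, and `G ≅ A × P` via `(a, x) ↦ a * x`. -/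
theorem thompson_A_times_B
    {G : Type*} [Group G] (p : ℕ) (hp : p.Prime)
    (htor : ∀ g : G, IsOfFinOrder g)
    (A P : Subgroup G) (hPnormal : P.Normal) (hPp : IsPGroup p ↥P)
    (hPni : NormalizerIncreasing ↥P)
    (hA : ∀ a ∈ A, Nat.Coprime (orderOf a) p)
    (hgen : ∀ g : G, ∃ a ∈ A, ∃ x ∈ P, g = a * x)
    (B : Subgroup G) (hB : B ≤ P ⊓ Subgroup.centralizer (A : Set G))
    (hCB : ⁅P ⊓ Subgroup.centralizer (B : Set G), A⁆ = ⊥) :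
    ⁅A, P⁆ = ⊥ ∧ A ⊓ P = ⊥ ∧
      ∃ e : (↥A × ↥P) ≃* G, ∀ ax : ↥A × ↥P, e ax = (ax.1 : G) * (ax.2 : G) :=
  thompson_A_times_B_general p A P hPnormal hPp hPni hA hgen B hB hCB
end

section
/- Let p be a prime and let G be a countable, locally finite group of characteristic p. Then every normal subgroup K of G is of characteristic p, i.e. C_K(O_p(K)) ≤ O_p(K). -/
/-- A group is locally finite if every finitely generated subgroup is finite. -/
def LocallyFiniteGroup (G : Type*) [Group G] : Prop :=
  ∀ s : Finset G, ((Subgroup.closure (s : Set G) : Subgroup G) : Set G).Finite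

/-- `H` is of characteristic `p`: the largest normal `p`-subgroup `O_p(H)` of `H` exists
and `C_H(O_p(H)) ≤ O_p(H)`. -/
def CharacteristicPGroup (p : ℕ) (H : Type*) [Group H] : Prop :=
  ∃ O : Subgroup H, IsGreatest {N : Subgroup H | N.Normal ∧ IsPGroup p ↥N} O ∧
    Subgroup.centralizer (O : Set H) ≤ O

section Aux

variable {p : ℕ} {H : Type*} [Group H]

/-- A finite sup of normal `p`-subgroups is a `p`-group. -/
lemma finsetSup_pgroup {ι : Type*} (f : ι → Subgroup H)
    (hnorm : ∀ i, (f i).Normal) (hpg : ∀ i, IsPGroup p ↥(f i)) (t : Finset ι) :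
    IsPGroup p ↥(t.sup f) := by
  classical
  induction t using Finset.induction_on with
  | empty => rw [Finset.sup_empty]; exact IsPGroup.of_bot
  | @insert a t ha ih =>
    rw [Finset.sup_insert]
    haveI := hnorm a
    exact IsPGroup.to_sup_of_normal_left (hpg a) ih

/-- The sup of all normal `p`-subgroups is the greatest normal `p`-subgroup. -/
lemma sSup_pgroups_isGreatest :
    IsGreatest {N : Subgroup H | N.Normal ∧ IsPGroup p ↥N}
      (sSup {N : Subgroup H | N.Normal ∧ IsPGroup p ↥N}) := by
  classical
  set S : Set (Subgroup H) := {N : Subgroup H | N.Normal ∧ IsPGroup p ↥N} with hS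
  have hmem : ∀ x ∈ sSup S, ∃ t : Finset S, x ∈ t.sup (fun N => (N : Subgroup H)) := by
    intro x hx
    rw [sSup_eq_iSup'] at hx
    refine Subgroup.iSup_induction _
      (C := fun x => ∃ t : Finset S, x ∈ t.sup (fun N => (N : Subgroup H))) hx ?_ ?_ ?_
    · intro i x hxi
      exact ⟨{i}, by simpa [Finset.sup_singleton] using hxi⟩
    · exact ⟨∅, by simp⟩
    · rintro x y ⟨t1, h1⟩ ⟨t2, h2⟩
      have l1 : t1.sup (fun N => (N : Subgroup H)) ≤ (t1 ∪ t2).sup (fun N => (N : Subgroup H)) :=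
        Finset.sup_mono Finset.subset_union_left
      have l2 : t2.sup (fun N => (N : Subgroup H)) ≤ (t1 ∪ t2).sup (fun N => (N : Subgroup H)) :=
        Finset.sup_mono Finset.subset_union_right
      exact ⟨t1 ∪ t2, mul_mem (l1 h1) (l2 h2)⟩
  have hnorm : (sSup S).Normal := by
    constructor
    intro n hn g
    rw [sSup_eq_iSup'] at hn
    have : g * n * g⁻¹ ∈ ⨆ (N : S), (N : Subgroup H) := by
      refine Subgroup.iSup_induction _
        (C := fun n => g * n * g⁻¹ ∈ ⨆ (N : S), (N : Subgroup H)) hn ?_ ?_ ?_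
      · intro N x hx
        exact le_iSup (fun (N : S) => (N : Subgroup H)) N (N.2.1.conj_mem x hx g)
      · simpa using one_mem _
      · intro x y hx hy
        have h : g * (x * y) * g⁻¹ = (g * x * g⁻¹) * (g * y * g⁻¹) := by group
        rw [h]; exact mul_mem hx hy
    rwa [sSup_eq_iSup']
  have hpg : IsPGroup p ↥(sSup S) := by
    rintro ⟨x, hx⟩
    obtain ⟨t, ht⟩ := hmem x hx
    have hsup : IsPGroup p ↥(t.sup (fun N => (N : Subgroup H))) :=
      finsetSup_pgroup _ (fun i => i.2.1) (fun i => i.2.2) t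
    obtain ⟨n, hn⟩ := hsup ⟨x, ht⟩
    have hx1 : x ^ p ^ n = 1 := by
      have := congrArg Subtype.val hn
      simpa using this
    exact ⟨n, Subtype.ext (by simpa using hx1)⟩
  exact ⟨⟨hnorm, hpg⟩, fun N hN => le_sSup hN⟩

end Aux

/-- Lemma 6.5(a). Every normal subgroup of a countable, locally finite
group of characteristic `p` is of characteristic `p`. -/
theorem normal_subgroup_characteristicP
    {G : Type*} [Group G] (p : ℕ) (hp : p.Prime)
    [Countable G] (hlf : LocallyFiniteGroup G)
    (hchar : CharacteristicPGroup p G)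
    (K : Subgroup G) (hK : K.Normal) :
    CharacteristicPGroup p ↥K := by
  classical
  obtain ⟨O, ⟨⟨hOnorm, hOp⟩, hOub⟩, hOc⟩ := hchar
  set S : Set (Subgroup ↥K) := {N : Subgroup ↥K | N.Normal ∧ IsPGroup p ↥N} with hS
  have hPgr : IsGreatest S (sSup S) := sSup_pgroups_isGreatest
  set P : Subgroup ↥K := sSup S with hP
  refine ⟨P, hPgr, ?_⟩
  -- every element of G has finite order
  have htor : ∀ g : G, IsOfFinOrder g := by
    intro g
    have hfin := hlf {g}
    have hsub : (Submonoid.powers g : Set G) ⊆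
        ((Subgroup.closure (({g} : Finset G) : Set G) : Subgroup G) : Set G) := by
      rintro x ⟨n, rfl⟩
      exact pow_mem (Subgroup.subset_closure (by simp)) n
    exact finite_powers.mp (hfin.subset hsub)
  -- O ⊓ K sits inside (the image of) P
  have hOKP : ∀ z : G, z ∈ O → z ∈ K → ∃ hzK : z ∈ K, (⟨z, hzK⟩ : ↥K) ∈ P := by
    intro z hzO hzK
    set N : Subgroup ↥K := (O ⊓ K).subgroupOf K with hN
    have hNn : N.Normal := by
      constructor
      rintro n hn k
      rw [Subgroup.mem_subgroupOf] at hn ⊢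
      refine Subgroup.mem_inf.mpr ⟨?_, (k * n * k⁻¹).2⟩
      have h1 : (k : G) * (n : G) * (k : G)⁻¹ ∈ O :=
        hOnorm.conj_mem _ (Subgroup.mem_inf.mp hn).1 (k : G)
      simpa using h1
    have hNp : IsPGroup p ↥N := (hOp.to_le inf_le_left).comap_subtype
    have hNP : N ≤ P := hPgr.2 ⟨hNn, hNp⟩
    exact ⟨hzK, hNP (by rw [Subgroup.mem_subgroupOf]; exact ⟨hzO, hzK⟩)⟩
  -- the key computation
  have key : ∀ x : ↥K, x ∈ Subgroup.centralizer (P : Set ↥K) → ∃ n : ℕ, x ^ p ^ n = 1 := by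
    intro x hx
    rw [Subgroup.mem_centralizer_iff] at hx
    set g : G := (x : G) with hgdef
    have hg : IsOfFinOrder g := htor g
    have hn0 : orderOf g ≠ 0 := hg.orderOf_pos.ne'
    set k := (orderOf g).factorization p with hk
    set y : G := g ^ p ^ k with hy
    have hyK : y ∈ K := pow_mem x.2 _
    have hyord : orderOf y = ordCompl[p] (orderOf g) := by
      rw [hy, orderOf_pow' g (pow_ne_zero k hp.pos.ne'),
        Nat.gcd_eq_right (Nat.ordProj_dvd _ _)]
    have hcop : Nat.Coprime p (orderOf y) := by
      rw [hyord]; exact Nat.coprime_ordCompl hp hn0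
    -- y commutes with everything in the image of P
    have hyc : ∀ z : ↥K, z ∈ P → (z : G) * y = y * (z : G) := by
      intro z hz
      have hgz : (z : G) * g = g * (z : G) := congrArg Subtype.val (hx z hz)
      have : Commute (z : G) g := hgz
      exact (this.pow_right _)
    -- y commutes with everything in O
    have hyO : ∀ q ∈ O, q * y = y * q := by
      intro q hq
      set c : G := q⁻¹ * y⁻¹ * q * y with hc
      have hcO : c ∈ O := by
        have h1 : y⁻¹ * q * y ∈ O := by simpa using hOnorm.conj_mem q hq y⁻¹
        have h2 : c = q⁻¹ * (y⁻¹ * q * y) := by rw [hc]; group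
        rw [h2]; exact mul_mem (inv_mem hq) h1
      have hcK : c ∈ K := by
        have h1 : q⁻¹ * y⁻¹ * q ∈ K := by simpa using hK.conj_mem y⁻¹ (inv_mem hyK) q⁻¹
        exact mul_mem h1 hyK
      obtain ⟨hcK', hcP⟩ := hOKP c hcO hcK
      have hcy : Commute c y := by
        have := hyc ⟨c, hcK'⟩ hcP
        exact this
      have keyid : ∀ n : ℕ, y⁻¹ ^ n * q * y ^ n = q * c ^ n := by
        intro n
        induction n with
        | zero => simp
        | succ n ih =>
          have hstep : y⁻¹ * q * y = q * c := by rw [hc]; group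
          have e1 : y⁻¹ ^ (n + 1) * q * y ^ (n + 1)
              = y⁻¹ ^ n * (y⁻¹ * q * y) * y ^ n := by
            rw [pow_succ, pow_succ']
            group
          rw [e1, hstep]
          have e2 : y⁻¹ ^ n * (q * c) * y ^ n = y⁻¹ ^ n * q * (c * y ^ n) := by group
          rw [e2, (hcy.pow_right n).eq]
          have e3 : y⁻¹ ^ n * q * (y ^ n * c) = (y⁻¹ ^ n * q * y ^ n) * c := by group
          rw [e3, ih, mul_assoc, ← pow_succ]
      have hcm : c ^ orderOf y = 1 := by
        have h0 := keyid (orderOf y)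
        rw [inv_pow, pow_orderOf_eq_one] at h0
        simp only [inv_one, one_mul, mul_one] at h0
        exact left_eq_mul.mp h0
      have hcd : orderOf c ∣ orderOf y := orderOf_dvd_of_pow_eq_one hcm
      obtain ⟨j, hj⟩ := hOp ⟨c, hcO⟩
      have hcpj : c ^ p ^ j = 1 := by
        have := congrArg Subtype.val hj
        simpa using this
      have hcd2 : orderOf c ∣ p ^ j := orderOf_dvd_of_pow_eq_one hcpj
      have hcopj : Nat.Coprime (p ^ j) (orderOf y) := hcop.pow_left j
      have hc1 : orderOf c = 1 := Nat.eq_one_of_dvd_coprimes hcopj hcd2 hcd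
      have hceq : c = 1 := orderOf_eq_one_iff.mp hc1
      have : q⁻¹ * y⁻¹ * q * y = 1 := by rw [← hc]; exact hceq
      have h2 : y⁻¹ * q * y = q := by
        calc y⁻¹ * q * y = q * (q⁻¹ * y⁻¹ * q * y) := by group
          _ = q := by rw [this, mul_one]
      calc q * y = y * (y⁻¹ * q * y) := by group
        _ = y * q := by rw [h2]
    have hyCO : y ∈ Subgroup.centralizer (O : Set G) :=
      Subgroup.mem_centralizer_iff.mpr fun q hq => hyO q hq
    have hyO' : y ∈ O := hOc hyCO
    obtain ⟨j, hj⟩ := hOp ⟨y, hyO'⟩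
    have hyp : y ^ p ^ j = 1 := by
      have := congrArg Subtype.val hj
      simpa using this
    have hyd : orderOf y ∣ p ^ j := orderOf_dvd_of_pow_eq_one hyp
    have hy1 : orderOf y = 1 := by
      have h1 : orderOf y ∣ Nat.gcd (orderOf y) (p ^ j) := Nat.dvd_gcd dvd_rfl hyd
      have h2 : Nat.gcd (orderOf y) (p ^ j) = 1 := (hcop.symm.pow_right j)
      rwa [h2, Nat.dvd_one] at h1
    have hyone : y = 1 := orderOf_eq_one_iff.mp hy1
    refine ⟨k, Subtype.ext ?_⟩
    simpa using hyone
  -- finish: the centralizer of P in K is a normal p-subgroup, hence ≤ P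
  intro x hx
  have hPn : P.Normal := hPgr.1.1
  have hCnorm : (Subgroup.centralizer (P : Set ↥K)).Normal := by
    constructor
    intro n hn g
    rw [Subgroup.mem_centralizer_iff] at hn ⊢
    intro m hm
    have hm' : g⁻¹ * m * g ∈ P := by simpa using hPn.conj_mem m hm g⁻¹
    have h := hn _ hm'
    calc m * (g * n * g⁻¹) = g * ((g⁻¹ * m * g) * n) * g⁻¹ := by group
      _ = g * (n * (g⁻¹ * m * g)) * g⁻¹ := by rw [h]
      _ = (g * n * g⁻¹) * m := by group
  have hCp : IsPGroup p ↥(Subgroup.centralizer (P : Set ↥K)) := by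
    rintro ⟨z, hz⟩
    obtain ⟨n, hn⟩ := key z hz
    exact ⟨n, Subtype.ext (by simpa using hn)⟩
  exact hPgr.2 ⟨hCnorm, hCp⟩ hx
end

section
/- Let p be a prime and let G be a countable, locally finite group of characteristic p. Suppose that G has a maximal p-subgroup S such that every p-subgroup of G is conjugate in G to a subgroup of S, and that S has the normalizer-increasing property. Then every p-local subgroup of G is of characteristic p; that is, for every p-subgroup U of G, the group H = N_G(U) satisfies C_H(O_p(H)) ≤ O_p(H). -/
/-!
Let `W = O_p(G)`, `H = N_G(U)` and `Q = O_p(H)`. As `C_H(Q)` is normal in `H`, it suffices that it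
is a `p`-group, and by local finiteness that it contains no nontrivial `p'`-element `x`.
Conjugating into `Sp` shows that every `p`-subgroup of `G` is normalizer-increasing. Take `T`
maximal among the `p`-subgroups of `C_G(x)` containing `Q`. If `W ≤ T` then `x ∈ C_G(W) ≤ W`, so
`x = 1`. Otherwise some `w ∈ W \ T` normalizes `T`; then `c = ⁅w, x⁆ ∈ W` centralizes `T ≥ U`, so
`c ∈ W ∩ H ≤ Q` commutes with `x`. Then the order of the `p`-element `c` divides that of `x`, so
`c = 1`, and `⟨w⟩T` is a larger `p`-subgroup of `C_G(x)`.
-/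

open Subgroup
open scoped commutatorElement

section

variable {G : Type*} [Group G] {p : ℕ}

theorem NormalizerIncreasing.of_injective {P Q : Type*} [Group P] [Group Q]
    (hQ : NormalizerIncreasing Q) (f : P →* Q) (hf : Function.Injective f) :
    NormalizerIncreasing P := by
  intro X Y hXY
  obtain ⟨s, ⟨hs, hsY⟩, hsX⟩ :=
    SetLike.exists_of_lt (hQ _ _ ((map_lt_map_iff_of_injective hf).mpr hXY))
  obtain ⟨y, hy, rfl⟩ := hsY
  have hyN : y ∈ normalizer (X : Set P) := by
    rw [← comap_map_eq_self_of_injective hf X]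
    exact le_normalizer_comap f hs
  exact SetLike.lt_iff_le_and_exists.mpr
    ⟨le_inf le_normalizer hXY.le, y, mem_inf.mpr ⟨hyN, hy⟩, fun hyX => hsX (mem_map_of_mem f hyX)⟩

theorem NormalizerIncreasing.of_conj_le {S B : Subgroup G} (hS : NormalizerIncreasing S) (g : G)
    (hg : ∀ b ∈ B, g⁻¹ * b * g ∈ S) : NormalizerIncreasing B :=
  hS.of_injective (((MulAut.conj g⁻¹).toMonoidHom.comp B.subtype).codRestrict S
      fun b => by simpa using hg b b.2)
    fun a b hab => by simpa using congrArg Subtype.val hab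

theorem NormalizerIncreasing.exists_mem_normalizer_notMem {A B : Subgroup G}
    (hB : NormalizerIncreasing B) (hAB : A < B) :
    ∃ z ∈ B, z ∈ normalizer (A : Set G) ∧ z ∉ A := by
  have hlt : A.subgroupOf B < ⊤ :=
    lt_top_iff_ne_top.mpr fun h => hAB.not_ge (subgroupOf_eq_top.mp h)
  obtain ⟨z, ⟨hz, -⟩, hzA⟩ := SetLike.exists_of_lt (hB _ _ hlt)
  rw [← subgroupOf_normalizer_eq hAB.le] at hz
  exact ⟨z, z.2, hz, hzA⟩

theorem exists_mem_normalizer_notMem_of_not_le {T W : Subgroup G} [W.Normal]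
    (hni : NormalizerIncreasing (T ⊔ W : Subgroup G)) (hWT : ¬W ≤ T) :
    ∃ w ∈ W, w ∈ normalizer (T : Set G) ∧ w ∉ T := by
  obtain ⟨z, hz, hzN, hzT⟩ := hni.exists_mem_normalizer_notMem (left_lt_sup.mpr hWT)
  obtain ⟨t, ht, w, hw, rfl⟩ := mem_sup_of_normal_right.mp hz
  refine ⟨w, hw, ?_, fun hwT => hzT (T.mul_mem ht hwT)⟩
  simpa using mul_mem (inv_mem (le_normalizer ht)) hzN

theorem commutatorElement_mem_centralizer {T : Subgroup G} {w x : G}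
    (hw : w ∈ normalizer (T : Set G)) (hx : x ∈ centralizer (T : Set G)) :
    ⁅w, x⁆ ∈ centralizer (T : Set G) :=
  mul_mem ((normal_subgroupOf_iff (centralizer_le_normalizer _)).mp inferInstance x w hx hw)
    (inv_mem hx)

theorem Subgroup.Normal.commutatorElement_mem {W : Subgroup G} (hW : W.Normal) {w : G}
    (hw : w ∈ W) (x : G) : ⁅w, x⁆ ∈ W := by
  simpa [commutatorElement_def, mul_assoc] using mul_mem hw (hW.conj_mem _ (inv_mem hw) x)

theorem orderOf_commutatorElement_dvd {w x : G} (h : Commute ⁅w, x⁆ x) :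
    orderOf ⁅w, x⁆ ∣ orderOf x := by
  refine orderOf_dvd_of_pow_eq_one ?_
  calc ⁅w, x⁆ ^ orderOf x = (⁅w, x⁆ * x) ^ orderOf x := by
        rw [h.mul_pow, pow_orderOf_eq_one, mul_one]
    _ = w * x ^ orderOf x * w⁻¹ := by rw [← conj_pow]; group
    _ = 1 := by simp

theorem IsPGroup.eq_one_of_mem_of_coprime {W : Subgroup G} (hW : IsPGroup p W) {g : G}
    (hg : g ∈ W) (hco : (orderOf g).Coprime p) : g = 1 := by
  obtain ⟨k, hk⟩ := hW ⟨g, hg⟩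
  refine orderOf_eq_one_iff.mp ((hco.pow_right k).eq_one_of_dvd (orderOf_dvd_of_pow_eq_one ?_))
  simpa using congrArg Subtype.val hk

theorem isPGroup_of_forall_coprime_orderOf_eq_one (hp : p.Prime)
    (htors : ∀ g : G, IsOfFinOrder g) (h : ∀ g : G, (orderOf g).Coprime p → g = 1) :
    IsPGroup p G := by
  intro g
  have hn : orderOf g ≠ 0 := (htors g).orderOf_pos.ne'
  refine ⟨(orderOf g).factorization p, ?_⟩
  apply h
  rw [orderOf_pow_of_dvd (pow_ne_zero _ hp.ne_zero) (Nat.ordProj_dvd _ _)]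
  exact (Nat.coprime_ordCompl hp hn).symm

theorem LocallyFiniteGroup.isOfFinOrder (hG : LocallyFiniteGroup G) (g : G) : IsOfFinOrder g := by
  rw [← finite_zpowers, zpowers_eq_closure]
  simpa using hG {g}

theorem IsPGroup.exists_maximal_le {Q K : Subgroup G} (hQ : IsPGroup p Q) (hQK : Q ≤ K) :
    ∃ T, Q ≤ T ∧ Maximal (fun T : Subgroup G => IsPGroup p T ∧ T ≤ K) T := by
  -- `Sylow p K` means a maximal `p`-subgroup of `K`; no finiteness is involved.
  obtain ⟨P, hP⟩ := (hQ.comap_subtype (K := K)).exists_le_sylow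
  refine ⟨(P : Subgroup K).map K.subtype, fun q hq => ⟨⟨q, hQK hq⟩, hP hq, rfl⟩,
    ⟨P.isPGroup'.map _, map_subtype_le _⟩, fun T' ⟨hT'p, hT'K⟩ hle => ?_⟩
  rw [← map_comap_eq_self (hT'K.trans_eq K.range_subtype.symm)]
  exact map_mono (P.is_maximal' hT'p.comap_subtype ((map_le_iff_le_comap).mp hle)).le

theorem eq_one_of_mem_centralizer_of_coprime {W Q : Subgroup G} [hW : W.Normal]
    (hWp : IsPGroup p W) (hWc : centralizer (W : Set G) ≤ W)
    (hni : ∀ B : Subgroup G, IsPGroup p B → NormalizerIncreasing B)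
    (hQp : IsPGroup p Q) (hWQ : W ⊓ centralizer (Q : Set G) ≤ Q)
    {x : G} (hx : x ∈ centralizer (Q : Set G)) (hxp : (orderOf x).Coprime p) : x = 1 := by
  obtain ⟨T, hQT, ⟨hTp, hTx⟩, hTmax⟩ :=
    hQp.exists_maximal_le fun q hq => mem_centralizer_singleton_iff.mpr (hx q hq)
  have hxT : x ∈ centralizer (T : Set G) := fun t ht => mem_centralizer_singleton_iff.mp (hTx ht)
  by_cases hWT : W ≤ T
  · exact hWp.eq_one_of_mem_of_coprime (hWc (centralizer_le hWT hxT)) hxp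
  obtain ⟨w, hwW, hwN, hwT⟩ :=
    exists_mem_normalizer_notMem_of_not_le (hni _ (hTp.to_sup_of_normal_right hWp)) hWT
  have hcW : ⁅w, x⁆ ∈ W := hW.commutatorElement_mem hwW x
  have hcQ : ⁅w, x⁆ ∈ Q :=
    hWQ ⟨hcW, centralizer_le hQT (commutatorElement_mem_centralizer hwN hxT)⟩
  have hc : ⁅w, x⁆ = 1 := hWp.eq_one_of_mem_of_coprime hcW
    (hxp.coprime_dvd_left (orderOf_commutatorElement_dvd
      (mem_centralizer_singleton_iff.mp (hTx (hQT hcQ)))))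
  have hwx : w ∈ centralizer {x} :=
    mem_centralizer_singleton_iff.mpr (commutatorElement_eq_one_iff_commute.mp hc)
  have hwTp : IsPGroup p (zpowers w ⊔ T : Subgroup G) :=
    (hWp.to_le (zpowers_le.mpr hwW)).to_sup_of_normal_right' hTp (zpowers_le.mpr hwN)
  exact (hwT (hTmax ⟨hwTp, sup_le (zpowers_le.mpr hwx) hTx⟩ le_sup_right
    (mem_sup_left (mem_zpowers w)))).elim

section pCore

variable (p) (H : Type*) [Group H]

/-- The `p`-core `O_p(H)`. -/
def pCore : Subgroup H :=
  sSup {N : Subgroup H | N.Normal ∧ IsPGroup p N}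

instance pCore_normal : (pCore p H).Normal :=
  sSup_normal _ fun _ hN => hN.1

variable {p H}

theorem le_pCore {N : Subgroup H} (hN : N.Normal) (hNp : IsPGroup p N) : N ≤ pCore p H :=
  le_sSup ⟨hN, hNp⟩

variable (p H)

theorem isPGroup_pCore : IsPGroup p (pCore p H) := by
  have hne : {N : Subgroup H | N.Normal ∧ IsPGroup p N}.Nonempty := ⟨⊥, normal_bot, .of_bot⟩
  have hdir : DirectedOn (· ≤ ·) {N : Subgroup H | N.Normal ∧ IsPGroup p N} := by
    rintro N₁ ⟨hN₁, hN₁p⟩ N₂ ⟨hN₂, hN₂p⟩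
    exact ⟨N₁ ⊔ N₂, ⟨sup_normal N₁ N₂, hN₁p.to_sup_of_normal_right hN₂p⟩,
      le_sup_left, le_sup_right⟩
  rintro ⟨g, hg⟩
  obtain ⟨N, ⟨-, hNp⟩, hgN⟩ := (mem_sSup_of_directedOn hne hdir).mp hg
  obtain ⟨k, hk⟩ := hNp ⟨g, hgN⟩
  exact ⟨k, Subtype.ext (by simpa using congrArg Subtype.val hk)⟩

theorem isGreatest_pCore : IsGreatest {N : Subgroup H | N.Normal ∧ IsPGroup p N} (pCore p H) :=
  ⟨⟨inferInstance, isPGroup_pCore p H⟩, fun _ hN => le_pCore hN.1 hN.2⟩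

variable {p H}

theorem characteristicPGroup_of_isPGroup_centralizer
    (h : IsPGroup p (centralizer (pCore p H : Set H))) : CharacteristicPGroup p H :=
  ⟨pCore p H, isGreatest_pCore p H, le_pCore inferInstance h⟩

end pCore

theorem le_map_subtype_pCore {H N : Subgroup G} (hNH : N ≤ H) (hN : (N.subgroupOf H).Normal)
    (hNp : IsPGroup p N) : N ≤ (pCore p H).map H.subtype := by
  rw [← map_subgroupOf_eq_of_le hNH]
  exact map_mono (le_pCore hN hNp.comap_subtype)

theorem inf_centralizer_le_map_subtype_pCore {U W : Subgroup G} [hW : W.Normal]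
    (hU : IsPGroup p U) (hWp : IsPGroup p W) :
    W ⊓ centralizer
        ((pCore p (normalizer (U : Set G))).map (normalizer (U : Set G)).subtype : Set G) ≤
      (pCore p (normalizer (U : Set G))).map (normalizer (U : Set G)).subtype := by
  have hUQ := le_map_subtype_pCore le_normalizer normal_in_normalizer hU
  calc _ ≤ W ⊓ normalizer (U : Set G) :=
        inf_le_inf_left _ ((centralizer_le hUQ).trans (centralizer_le_normalizer _))
    _ ≤ _ := le_map_subtype_pCore inf_le_right
        (by rw [inf_subgroupOf_right]; exact hW.subgroupOf _) hWp.to_inf_left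

end

theorem pLocal_characteristicP_general
    {G : Type*} [Group G] (p : ℕ) (hp : p.Prime)
    (hlf : LocallyFiniteGroup G)
    (hchar : CharacteristicPGroup p G)
    (Sp : Subgroup G)
    (hSconj : ∀ T : Subgroup G, IsPGroup p ↥T → ∃ g : G, ∀ t ∈ T, g⁻¹ * t * g ∈ Sp)
    (hSni : NormalizerIncreasing ↥Sp)
    (U : Subgroup G) (hU : IsPGroup p ↥U) :
    CharacteristicPGroup p ↥(Subgroup.normalizer (U : Set G)) := by
  obtain ⟨W, ⟨⟨hW, hWp⟩, -⟩, hWc⟩ := hchar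
  have hni (B : Subgroup G) (hB : IsPGroup p B) : NormalizerIncreasing B :=
    have ⟨g, hg⟩ := hSconj B hB
    hSni.of_conj_le g hg
  set H := normalizer (U : Set G)
  refine characteristicPGroup_of_isPGroup_centralizer
    (isPGroup_of_forall_coprime_orderOf_eq_one hp (fun y => ?_) fun y hy => ?_)
  · simpa only [Submonoid.isOfFinOrder_coe] using hlf.isOfFinOrder ((y : H) : G)
  · have hyQ : ((y : H) : G) ∈ centralizer ((pCore p H).map H.subtype : Set G) := by
      rintro _ ⟨o, ho, rfl⟩
      exact congrArg Subtype.val (y.2 o ho)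
    have := eq_one_of_mem_centralizer_of_coprime hWp hWc hni ((isPGroup_pCore p H).map _)
      (inf_centralizer_le_map_subtype_pCore hU hWp) hyQ (by rwa [orderOf_coe, orderOf_coe])
    exact_mod_cast this

/-- Lemma 6.5(b). Let `G` be a countable, locally finite group of
characteristic `p` having a maximal `p`-subgroup `Sp` to which every `p`-subgroup of `G`
is conjugate (into), and suppose `Sp` has the normalizer-increasing property.  Then every
`p`-local subgroup `N_G(U)` of `G` is of characteristic `p`. -/
theorem pLocal_characteristicP
    {G : Type*} [Group G] (p : ℕ) (hp : p.Prime)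
    [Countable G] (hlf : LocallyFiniteGroup G)
    (hchar : CharacteristicPGroup p G)
    (Sp : Subgroup G) (hSp : IsPGroup p ↥Sp)
    (hSmax : ∀ T : Subgroup G, IsPGroup p ↥T → Sp ≤ T → T = Sp)
    (hSconj : ∀ T : Subgroup G, IsPGroup p ↥T → ∃ g : G, ∀ t ∈ T, g⁻¹ * t * g ∈ Sp)
    (hSni : NormalizerIncreasing ↥Sp)
    (U : Subgroup G) (hU : IsPGroup p ↥U) :
    CharacteristicPGroup p ↥(Subgroup.normalizer (U : Set G)) :=
  pLocal_characteristicP_general p hp hlf hchar Sp hSconj hSni U hU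
end
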